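/- arXiv:math/0702407 — 7 statements merged into one kernel-verified Lean document; each statement's English description precedes it below -/
import Mathlib

section
/- Let G be a totally disconnected metrizable locally compact group and Γ a subgroup of Aut(G). Suppose τ₁, τ₂, …, τₙ ∈ Aut(G) are distal automorphisms such that for every j = 1, 2, …, n the commutator condition [τ_j, ⟨Γ ∪ {τ₁,…,τ_{j−1}}⟩] ⊆ ⟨Γ ∪ {τ₁,…,τ_{j−1}}⟩ holds. Then for every compact open subgroup U of G invariant under Γ there exists a compact open subgroup V ⊆ U invariant under the subgroup ⟨Γ ∪ {τ₁,…,τₙ}⟩ of Aut(G). -/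
open Filter Topology MeasureTheory Pointwise

section AutDefs
variable (G : Type*) [Group G] [TopologicalSpace G]

/-- The group of topological (bicontinuous) automorphisms of `G`,
as a subgroup of the abstract automorphism group `MulAut G`. -/
def TopAut : Subgroup (MulAut G) where
  carrier := {γ : MulAut G | Continuous ⇑γ ∧ Continuous ⇑γ.symm}
  one_mem' := ⟨continuous_id, continuous_id⟩
  mul_mem' := fun ha hb => ⟨ha.1.comp hb.1, hb.2.comp ha.2⟩
  inv_mem' := fun ha => ⟨ha.2, ha.1⟩

variable {G}

/-- A subgroup `Γ` of the automorphism group acts distally on `G` : for every `x ≠ 1`,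
the identity is not in the closure of the orbit `Γ x`. -/
def IsDistalAutGroup (Γ : Subgroup ↥(TopAut G)) : Prop :=
  ∀ x : G, x ≠ 1 → (1 : G) ∉ closure {y : G | ∃ γ ∈ Γ, (γ : MulAut G) x = y}

/-- A topological automorphism is distal if the cyclic group it generates acts distally. -/
def IsDistalAut (τ : ↥(TopAut G)) : Prop := IsDistalAutGroup (Subgroup.zpowers τ)

/-- The contraction subgroup of an automorphism:
points whose forward orbit converges to the identity. -/
def ContractionAut (τ : ↥(TopAut G)) : Set G :=
  {x : G | Tendsto (fun n : ℕ => ((τ ^ n : ↥(TopAut G)) : MulAut G) x) atTop (nhds 1)}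

/-- A subgroup of the automorphism group is equicontinuous if `G` admits a
neighbourhood base at the identity consisting of invariant neighbourhoods. -/
def IsEquicontinuousAutGroup (Γ : Subgroup ↥(TopAut G)) : Prop :=
  ∀ U ∈ nhds (1 : G), ∃ V ∈ nhds (1 : G), V ⊆ U ∧ ∀ γ ∈ Γ, (γ : MulAut G) '' V = V

end AutDefs

/-!
Induction on `j`. For the inductive step let `σ` be distal with `σ Λ σ⁻¹ ⊆ Λ` and let `U` be a
`Λ`-invariant compact open subgroup; take `V = ⋂_{k ≥ 0} σ⁻ᵏ U`. Since `σᵏ Λ σ⁻ᵏ ⊆ Λ`, `V` is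
`Λ`-invariant, and clearly `σ V ⊆ V`. By Ellis' theorem every point of a compact distal system is
recurrent, so `σ⁻¹ V ⊆ V` as well. The same argument for `σ⁻¹` shows that `σ` maps the backward
core `⋂_{k ≥ 0} σᵏ U` into `U`; by compactness some finite backward intersection already lies in
`σ⁻¹ U`, which makes the forward intersections stabilize, so `V` is open.
-/

open Function Set MulAction

section Proximal
variable {X : Type*} [TopologicalSpace X]

def Proximal (f : X → X) (x y : X) : Prop :=
  ∃ p, (p, p) ∈ closure (range fun k : ℕ => (f^[k] x, f^[k] y))

lemma Proximal.map {Y : Type*} [TopologicalSpace Y] {f : X → X} {f' : Y → Y} {g : X → Y}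
    (hg : Continuous g) (hfg : Semiconj g f f') {x y : X} (h : Proximal f x y) :
    Proximal f' (g x) (g y) := by
  obtain ⟨p, hp⟩ := h
  refine ⟨g p, map_mem_closure (f := Prod.map g g) (hg.prodMap hg) hp ?_⟩
  rintro _ ⟨k, rfl⟩
  exact ⟨k, by simp [(hfg.iterate_right k).eq]⟩

variable [T2Space X] {f : X → X}

lemma exists_comp_self_eq_mem_closure_range_iterate [CompactSpace X] (hf : Continuous f) :
    ∃ u ∈ closure (range fun k : ℕ => f^[k + 1]), u ∘ u = u := by
  let _ : TopologicalSpace (Function.End X) := Pi.topologicalSpace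
  have : T2Space (Function.End X) := Pi.t2Space
  have : CompactSpace (Function.End X) := Pi.compactSpace
  set E : Set (Function.End X) := closure (range fun k : ℕ => f^[k + 1])
  have hmul_const : ∀ r : Function.End X, Continuous (· * r) :=
    fun r => continuous_pi fun x => continuous_apply (r x)
  have hiterate_mul : ∀ k, ∀ q ∈ E, f^[k + 1] ∘ q ∈ E := by
    intro k q hq
    refine MapsTo.closure_left ?_ (continuous_pi fun x => (hf.iterate (k + 1)).comp
      (continuous_apply x)) isClosed_closure hq
    rintro _ ⟨j, rfl⟩
    exact subset_closure ⟨k + 1 + j, iterate_add f (k + 1) (j + 1)⟩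
  have hmul : ∀ p ∈ E, ∀ q ∈ E, p * q ∈ E := by
    intro p hp q hq
    refine MapsTo.closure_left ?_ (hmul_const q) isClosed_closure hp
    rintro _ ⟨k, rfl⟩
    exact hiterate_mul k q hq
  exact exists_idempotent_in_compact_subsemigroup hmul_const E ⟨f, subset_closure ⟨0, rfl⟩⟩
    isClosed_closure.isCompact hmul

theorem mem_closure_range_iterate_succ_of_proximal_eq [CompactSpace X] (hf : Continuous f)
    (hprox : ∀ x y, Proximal f x y → x = y) (x : X) :
    x ∈ closure (range fun k : ℕ => f^[k + 1] x) := by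
  -- An idempotent `u` of the enveloping semigroup is injective by distality, hence `u = id`.
  obtain ⟨u, hu, huu⟩ := exists_comp_self_eq_mem_closure_range_iterate hf
  have hu_inj : Injective u := by
    intro y z hyz
    refine hprox y z ⟨u y, ?_⟩
    have := map_mem_closure (f := fun g : X → X => (g y, g z))
      (t := range fun k : ℕ => (f^[k] y, f^[k] z))
      ((continuous_apply y).prodMk (continuous_apply z)) hu
      (by rintro _ ⟨k, rfl⟩; exact ⟨k + 1, rfl⟩)
    rwa [← hyz] at this
  have hux : u x = x := hu_inj (congrFun huu x)
  have := map_mem_closure (f := fun g : X → X => g x)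
    (t := range fun k : ℕ => f^[k + 1] x) (continuous_apply x) hu
    (by rintro _ ⟨k, rfl⟩; exact ⟨k, rfl⟩)
  rwa [hux] at this

theorem IsCompact.mem_closure_range_iterate_succ_of_proximal_eq {K : Set X} (hK : IsCompact K)
    (hf : Continuous f) (hfK : MapsTo f K K) (hprox : ∀ x y, Proximal f x y → x = y) {x : X}
    (hx : x ∈ K) : x ∈ closure (range fun k : ℕ => f^[k + 1] x) := by
  have : CompactSpace K := isCompact_iff_compactSpace.mp hK
  have hrec := _root_.mem_closure_range_iterate_succ_of_proximal_eq (hf.restrict hfK)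
    (fun a b hab => Subtype.ext (hprox a b (hab.map continuous_subtype_val fun _ => rfl)))
    ⟨x, hx⟩
  refine map_mem_closure continuous_subtype_val hrec ?_
  rintro _ ⟨k, rfl⟩
  exact ⟨k, (hfK.coe_iterate_restrict ⟨x, hx⟩ (k + 1)).symm⟩

end Proximal

section ForwardCore
variable {H X : Type*} [Group H] [MulAction H X] {σ : H} {U : Set X}

def forwardCore (σ : H) (U : Set X) : Set X := {x | ∀ k : ℕ, σ ^ k • x ∈ U}

lemma forwardCore_subset : forwardCore σ U ⊆ U := fun x hx => by
  simpa using hx 0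

lemma pow_smul_mem_forwardCore {x : X} (hx : x ∈ forwardCore σ U) (k : ℕ) :
    σ ^ k • x ∈ forwardCore σ U :=
  fun j => by simpa only [smul_smul, ← pow_add] using hx (j + k)

variable [TopologicalSpace X] [ContinuousConstSMul H X]

lemma IsClosed.forwardCore (hU : IsClosed U) : IsClosed (forwardCore σ U) := by
  simp only [_root_.forwardCore, ofPred_forall]
  exact isClosed_iInter fun k => hU.preimage (continuous_const_smul _)

variable [T2Space X]

lemma IsCompact.forwardCore (hU : IsCompact U) : IsCompact (forwardCore σ U) :=
  hU.of_isClosed_subset hU.isClosed.forwardCore forwardCore_subset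

lemma inv_smul_mem_forwardCore (hU : IsCompact U)
    (hprox : ∀ x y, Proximal (σ • · : X → X) x y → x = y) {x : X} (hx : x ∈ forwardCore σ U) :
    σ⁻¹ • x ∈ forwardCore σ U := by
  have hrec := hU.forwardCore.mem_closure_range_iterate_succ_of_proximal_eq
    (continuous_const_smul σ) (fun y hy => by simpa using pow_smul_mem_forwardCore hy 1) hprox hx
  refine MapsTo.closure_left ?_ (continuous_const_smul σ⁻¹) hU.isClosed.forwardCore hrec
  rintro _ ⟨k, rfl⟩
  simpa only [smul_iterate, pow_succ', mul_smul, inv_smul_smul] using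
    pow_smul_mem_forwardCore hx k

lemma isOpen_forwardCore (hUc : IsCompact U) (hUo : IsOpen U)
    (hback : ∀ x ∈ forwardCore σ⁻¹ U, σ • x ∈ U) : IsOpen (forwardCore σ U) := by
  set B : ℕ → Set X := fun n => {x | ∀ k ≤ n, σ⁻¹ ^ k • x ∈ U}
  have hB_anti : Antitone B := fun m n hmn x hx k hk => hx k (hk.trans hmn)
  have hB_compact (n : ℕ) : IsCompact (B n) := by
    refine hUc.of_isClosed_subset ?_ fun x hx => by simpa using hx 0 n.zero_le
    simp only [B, ofPred_forall]
    exact isClosed_iInter fun k => isClosed_iInter fun _ =>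
      hUc.isClosed.preimage (continuous_const_smul _)
  obtain ⟨n, hn⟩ := exists_subset_nhds_of_isCompact hB_anti.directed_ge hB_compact
    (U := (σ • ·) ⁻¹' U) fun x hx => (hUo.preimage (continuous_const_smul σ)).mem_nhds
      (hback x fun k => mem_iInter.1 hx k k le_rfl)
  have hstep (y : X) (hy : ∀ k ≤ n, σ ^ k • y ∈ U) (k : ℕ) (hk : k ≤ n) : σ ^ k • σ • y ∈ U := by
    rw [smul_smul, ← pow_succ]
    rcases hk.lt_or_eq with hk | rfl
    · exact hy (k + 1) hk
    · rw [pow_succ', mul_smul]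
      refine hn fun j hj => ?_
      rw [smul_smul, inv_pow, ← Nat.add_sub_cancel' hj, pow_add, inv_mul_cancel_left]
      exact hy _ (Nat.sub_le _ _)
  have hcore : forwardCore σ U = {y | ∀ k ≤ n, σ ^ k • y ∈ U} := by
    refine Subset.antisymm (fun y hy k _ => hy k) fun y hy m => ?_
    induction m generalizing y with
    | zero => simpa using hy 0 n.zero_le
    | succ m ih => simpa only [pow_succ, mul_smul] using ih (σ • y) (hstep y hy)
  rw [hcore]
  simp only [ofPred_forall]
  exact (finite_le_nat n).isOpen_biInter fun k _ => hUo.preimage (continuous_const_smul _)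

end ForwardCore

def Subgroup.forwardCore {H G : Type*} [Group H] [Group G] [MulDistribMulAction H G] (σ : H)
    (U : Subgroup G) : Subgroup G where
  carrier := _root_.forwardCore σ (U : Set G)
  one_mem' k := by simpa only [smul_one, SetLike.mem_coe] using U.one_mem
  mul_mem' ha hb k := by simpa only [smul_mul', SetLike.mem_coe] using U.mul_mem (ha k) (hb k)
  inv_mem' ha k := by simpa only [smul_inv', SetLike.mem_coe] using U.inv_mem (ha k)

lemma Subgroup.coe_forwardCore {H G : Type*} [Group H] [Group G] [MulDistribMulAction H G]
    (σ : H) (U : Subgroup G) : (U.forwardCore σ : Set G) = _root_.forwardCore σ U :=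
  rfl

lemma Subgroup.pow_mul_mul_pow_inv_mem {K : Type*} [Group K] {Λ : Subgroup K} {σ : K}
    (hΛ : ∀ h ∈ Λ, σ * h * σ⁻¹ * h⁻¹ ∈ Λ) (k : ℕ) {h : K} (hh : h ∈ Λ) :
    σ ^ k * h * (σ ^ k)⁻¹ ∈ Λ := by
  induction k with
  | zero => simpa using hh
  | succ k ih =>
    have := Λ.mul_mem (hΛ _ ih) ih
    rw [inv_mul_cancel_right] at this
    simpa only [pow_succ', mul_inv_rev, mul_assoc] using this

section TopAut
variable {G : Type*} [Group G] [TopologicalSpace G]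

instance TopAut.continuousConstSMul : ContinuousConstSMul (TopAut G) G := ⟨fun σ => σ.2.1⟩

lemma IsDistalAut.inv {σ : TopAut G} (h : IsDistalAut σ) : IsDistalAut σ⁻¹ := by
  rwa [IsDistalAut, Subgroup.zpowers_inv]

lemma TopAut.mem_stabilizer_iff_image_eq {γ : TopAut G} {s : Set G} :
    γ ∈ stabilizer (TopAut G) s ↔ (γ : MulAut G) '' s = s := by
  rw [mem_stabilizer_iff, ← image_smul]
  rfl

variable [IsTopologicalGroup G]

lemma IsDistalAut.eq_of_proximal {σ : TopAut G} (hσ : IsDistalAut σ) {x y : G}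
    (h : Proximal (σ • · : G → G) x y) : x = y := by
  obtain ⟨p, hp⟩ := h
  by_contra hxy
  refine hσ (x * y⁻¹) (mul_inv_eq_one.not.2 hxy) ?_
  have := map_mem_closure (f := fun q : G × G => q.1 * q.2⁻¹)
    (t := {z | ∃ γ ∈ Subgroup.zpowers σ, (γ : MulAut G) (x * y⁻¹) = z})
    (continuous_fst.mul continuous_snd.inv) hp ?_
  · simpa using this
  rintro _ ⟨k, rfl⟩
  refine ⟨σ ^ k, Subgroup.pow_mem _ (Subgroup.mem_zpowers σ) k, ?_⟩
  change σ ^ k • (x * y⁻¹) = _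
  simp only [smul_iterate, smul_mul', smul_inv']

theorem IsDistalAut.exists_isCompact_isOpen_subgroup_le_stabilizer [T2Space G] {σ : TopAut G}
    (hσ : IsDistalAut σ) {Λ : Subgroup (TopAut G)} (hΛ : ∀ h ∈ Λ, σ * h * σ⁻¹ * h⁻¹ ∈ Λ)
    {U : Subgroup G} (hUc : IsCompact (U : Set G)) (hUo : IsOpen (U : Set G))
    (hUΛ : Λ ≤ stabilizer (TopAut G) (U : Set G)) :
    ∃ V : Subgroup G, IsCompact (V : Set G) ∧ IsOpen (V : Set G) ∧ V ≤ U ∧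
      σ ∈ stabilizer (TopAut G) (V : Set G) ∧ Λ ≤ stabilizer (TopAut G) (V : Set G) := by
  refine ⟨U.forwardCore σ, hUc.forwardCore, isOpen_forwardCore hUc hUo fun x hx => ?_,
    forwardCore_subset, ?_, ?_⟩
  · simpa using forwardCore_subset
      (inv_smul_mem_forwardCore hUc (fun x y => hσ.inv.eq_of_proximal) hx)
  · refine mem_stabilizer_set.2 fun x => ⟨fun hx => ?_,
      fun hx => by
        simpa only [pow_one, Subgroup.coe_forwardCore] using pow_smul_mem_forwardCore hx 1⟩
    have := inv_smul_mem_forwardCore hUc (fun x y => hσ.eq_of_proximal) hx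
    rwa [inv_smul_smul] at this
  · rw [le_stabilizer_iff_smul_le]
    rintro γ hγ _ ⟨x, hx, rfl⟩ k
    rw [smul_smul, ← inv_mul_cancel_right (σ ^ k * γ) (σ ^ k), mul_smul]
    exact (mem_stabilizer_set.1 (hUΛ (Subgroup.pow_mul_mul_pow_inv_mem hΛ k hγ)) _).2 (hx k)

end TopAut

theorem lemma_2_2_general {G : Type*} [Group G] [TopologicalSpace G] [IsTopologicalGroup G]
    [TopologicalSpace.MetrizableSpace G]
    (Γ : Subgroup ↥(TopAut G)) (n : ℕ) (τ : Fin n → ↥(TopAut G))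
    (hdistal : ∀ j : Fin n, IsDistalAut (τ j))
    (hcomm : ∀ j : Fin n, ∀ h ∈ Subgroup.closure ((Γ : Set ↥(TopAut G)) ∪ τ '' {i : Fin n | i < j}),
      τ j * h * (τ j)⁻¹ * h⁻¹ ∈
        Subgroup.closure ((Γ : Set ↥(TopAut G)) ∪ τ '' {i : Fin n | i < j}))
    (U : Subgroup G) (hUcomp : IsCompact (U : Set G)) (hUopen : IsOpen (U : Set G))
    (hUinv : ∀ γ ∈ Γ, (γ : MulAut G) '' (U : Set G) = U) :
    ∃ V : Subgroup G, IsCompact (V : Set G) ∧ IsOpen (V : Set G) ∧ (V : Set G) ⊆ (U : Set G) ∧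
      ∀ γ ∈ Subgroup.closure ((Γ : Set ↥(TopAut G)) ∪ Set.range τ),
        (γ : MulAut G) '' (V : Set G) = V := by
  let Λ (j : ℕ) := Subgroup.closure ((Γ : Set (TopAut G)) ∪ τ '' {i | (i : ℕ) < j})
  suffices h : ∀ j ≤ n, ∃ V : Subgroup G, IsCompact (V : Set G) ∧ IsOpen (V : Set G) ∧ V ≤ U ∧
      Λ j ≤ stabilizer (TopAut G) (V : Set G) by
    obtain ⟨V, hVc, hVo, hVU, hV⟩ := h n le_rfl
    refine ⟨V, hVc, hVo, hVU, fun γ hγ => TopAut.mem_stabilizer_iff_image_eq.1 (hV ?_)⟩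
    simpa only [Λ, eq_univ_of_forall (s := {i : Fin n | (i : ℕ) < n}) Fin.isLt, image_univ]
      using hγ
  intro j hj
  induction j with
  | zero =>
    refine ⟨U, hUcomp, hUopen, le_rfl, ?_⟩
    have hΓ : Γ ≤ stabilizer (TopAut G) (U : Set G) :=
      fun γ hγ => TopAut.mem_stabilizer_iff_image_eq.2 (hUinv γ hγ)
    simpa [Λ] using hΓ
  | succ j ih =>
    obtain ⟨V, hVc, hVo, hVU, hV⟩ := ih (Nat.le_of_succ_le hj)
    obtain ⟨W, hWc, hWo, hWV, hσW, hΛW⟩ :=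
      (hdistal ⟨j, hj⟩).exists_isCompact_isOpen_subgroup_le_stabilizer (hcomm ⟨j, hj⟩) hVc hVo hV
    refine ⟨W, hWc, hWo, hWV.trans hVU, (Subgroup.closure_le _).2 ?_⟩
    rintro γ (hγ | ⟨i, hi, rfl⟩)
    · exact hΛW (Subgroup.subset_closure (Or.inl hγ))
    · rcases (Nat.lt_succ_iff.1 hi).lt_or_eq with hi | hi
      · exact hΛW (Subgroup.subset_closure (Or.inr ⟨i, hi, rfl⟩))
      · rwa [show i = ⟨j, hj⟩ from Fin.ext hi]

/-- **Lemma 2.2.** Let `G` be a totally disconnected metrizable locally compact group, `Γ` a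
subgroup of `Aut(G)`, and `τ₁, …, τₙ` distal automorphisms such that for every `j`,
`[τ_j, ⟨Γ ∪ {τ₁,…,τ_{j-1}}⟩] ⊆ ⟨Γ ∪ {τ₁,…,τ_{j-1}}⟩`. Then every compact open subgroup `U`
invariant under `Γ` contains a compact open subgroup `V` invariant under
`⟨Γ ∪ {τ₁,…,τₙ}⟩`. -/
theorem lemma_2_2 {G : Type*} [Group G] [TopologicalSpace G] [IsTopologicalGroup G]
    [TotallyDisconnectedSpace G] [TopologicalSpace.MetrizableSpace G] [LocallyCompactSpace G]
    (Γ : Subgroup ↥(TopAut G)) (n : ℕ) (τ : Fin n → ↥(TopAut G))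
    (hdistal : ∀ j : Fin n, IsDistalAut (τ j))
    (hcomm : ∀ j : Fin n, ∀ h ∈ Subgroup.closure ((Γ : Set ↥(TopAut G)) ∪ τ '' {i : Fin n | i < j}),
      τ j * h * (τ j)⁻¹ * h⁻¹ ∈
        Subgroup.closure ((Γ : Set ↥(TopAut G)) ∪ τ '' {i : Fin n | i < j}))
    (U : Subgroup G) (hUcomp : IsCompact (U : Set G)) (hUopen : IsOpen (U : Set G))
    (hUinv : ∀ γ ∈ Γ, (γ : MulAut G) '' (U : Set G) = U) :
    ∃ V : Subgroup G, IsCompact (V : Set G) ∧ IsOpen (V : Set G) ∧ (V : Set G) ⊆ (U : Set G) ∧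
      ∀ γ ∈ Subgroup.closure ((Γ : Set ↥(TopAut G)) ∪ Set.range τ),
        (γ : MulAut G) '' (V : Set G) = V :=
  lemma_2_2_general Γ n τ hdistal hcomm U hUcomp hUopen hUinv
end

section
/- Let G be a totally disconnected metrizable locally compact group and Γ a subgroup of Aut(G). Suppose that every γ ∈ Γ is distal and that Γ has a normal equicontinuous subgroup Γ₁ such that the quotient group Γ/Γ₁ contains a polycyclic subgroup of finite index. Then Γ is equicontinuous. -/
/-!
For a single distal automorphism `τ` of a totally disconnected locally compact group, fix a
compact open neighbourhood `K` of `1` and let `T` be the set of points whose forward `τ`-orbit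
stays in `K`. Distality makes every point with compact orbit closure recurrent (an idempotent of
the Ellis enveloping semigroup is injective, hence the identity), so `τ '' T = T`. Applied to
`τ⁻¹`, the same recurrence and a compactness argument show that `T` is cut out by finitely many
conditions `τⁱ x ∈ K`, so `T` is open: `⟨τ⟩` is equicontinuous.

Invariant neighbourhoods then pass from `Δ` to `Δ ⊔ ⟨τ⟩` when `τ` normalizes `Δ` (the points
whose `Δ`-orbit stays in a `⟨τ⟩`-invariant neighbourhood), hence up the polycyclic series pulled
back to `Γ`, and finally to the finite-index overgroup `Γ` (a finite intersection of translates).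
-/

open Filter Topology MeasureTheory Pointwise

/-- A group is polycyclic: it has a finite subnormal series with cyclic factors. -/
def IsPolycyclic (H : Type*) [Group H] : Prop :=
  ∃ (n : ℕ) (s : Fin (n + 1) → Subgroup H),
    s 0 = ⊥ ∧ s (Fin.last n) = ⊤ ∧
    ∀ i : Fin n, s i.castSucc ≤ s i.succ ∧
      ∃ hn : ((s i.castSucc).subgroupOf (s i.succ)).Normal,
        letI := hn
        IsCyclic (↥(s i.succ) ⧸ (s i.castSucc).subgroupOf (s i.succ))

/-- A group contains a polycyclic subgroup of finite index. -/
def HasPolycyclicFiniteIndex (H : Type*) [Group H] : Prop :=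
  ∃ P : Subgroup H, IsPolycyclic ↥P ∧ P.FiniteIndex

open Set Function MulAction

section Dynamics

variable {X : Type*} [TopologicalSpace X] {f : X → X}

def IsDistalMap (f : X → X) : Prop :=
  ∀ x y, x ≠ y → ∀ z, (z, z) ∉ closure (range fun n : ℕ => (f^[n] x, f^[n] y))

-- Positive iterates only: with `f^[0] = id` the statement `id ∈ envelopingSemigroup f` is void.
def envelopingSemigroup (f : X → X) : Set (X → X) :=
  closure (range fun n : ℕ => f^[n + 1])

theorem IsDistalMap.injective_of_mem_envelopingSemigroup (hd : IsDistalMap f) {g : X → X}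
    (hg : g ∈ envelopingSemigroup f) : Injective g := by
  intro x y hxy
  by_contra hne
  refine hd x y hne (g y) ?_
  have := map_mem_closure ((continuous_apply x).prodMk (continuous_apply y)) hg
    (t := range fun n : ℕ => (f^[n] x, f^[n] y)) (by rintro _ ⟨n, rfl⟩; exact ⟨n + 1, rfl⟩)
  rwa [hxy] at this

theorem comp_mem_envelopingSemigroup (hf : Continuous f) {g h : X → X}
    (hg : g ∈ envelopingSemigroup f) (hh : h ∈ envelopingSemigroup f) :
    h ∘ g ∈ envelopingSemigroup f := by
  have iterate_comp_mem (n : ℕ) : f^[n + 1] ∘ g ∈ envelopingSemigroup f :=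
    map_mem_closure (continuous_pi fun x => (hf.iterate (n + 1)).comp (continuous_apply x)) hg
      (by rintro _ ⟨m, rfl⟩; exact ⟨n + 1 + m, iterate_add f (n + 1) (m + 1)⟩)
  have := map_mem_closure (f := fun φ : X → X => φ ∘ g)
    (continuous_pi fun x => continuous_apply (g x)) hh
    (t := envelopingSemigroup f) (by rintro _ ⟨n, rfl⟩; exact iterate_comp_mem n)
  rwa [envelopingSemigroup, closure_closure] at this

theorem IsDistalMap.id_mem_envelopingSemigroup [CompactSpace X] [T2Space X] (hf : Continuous f)
    (hd : IsDistalMap f) : id ∈ envelopingSemigroup f := by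
  let _ : TopologicalSpace (Function.End X) := inferInstanceAs (TopologicalSpace (X → X))
  have : T2Space (Function.End X) := inferInstanceAs (T2Space (X → X))
  have : CompactSpace (Function.End X) := inferInstanceAs (CompactSpace (X → X))
  -- Ellis–Numakura gives an idempotent, and an injective idempotent is the identity.
  obtain ⟨η, hηE, hηη⟩ := exists_idempotent_in_compact_subsemigroup (M := Function.End X)
    (fun r => continuous_pi fun x => continuous_apply (r x)) (envelopingSemigroup f)
    ⟨f^[1], subset_closure ⟨0, rfl⟩⟩ isClosed_closure.isCompact
    (fun _ hg _ hh => comp_mem_envelopingSemigroup hf hh hg)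
  have : η = id := funext fun x => hd.injective_of_mem_envelopingSemigroup hηE (congrFun hηη x)
  exact this ▸ hηE

theorem IsDistalMap.mem_closure_range_iterate_succ [CompactSpace X] [T2Space X]
    (hf : Continuous f) (hd : IsDistalMap f) (x : X) :
    x ∈ closure (range fun n : ℕ => f^[n + 1] x) :=
  map_mem_closure (continuous_apply x) (hd.id_mem_envelopingSemigroup hf)
    (by rintro _ ⟨n, rfl⟩; exact ⟨n, rfl⟩)

theorem IsDistalMap.restrict (hd : IsDistalMap f) {s : Set X} (h : MapsTo f s s) :
    IsDistalMap (h.restrict f s s) := by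
  intro x y hxy z hz
  refine hd x y (Subtype.val_injective.ne hxy) z ?_
  exact map_mem_closure (f := Prod.map Subtype.val Subtype.val)
    (continuous_subtype_val.prodMap continuous_subtype_val) hz
    (by rintro _ ⟨n, rfl⟩; exact ⟨n, by simp [h.iterate_restrict]⟩)

theorem IsDistalMap.mem_closure_range_iterate_succ_of_isCompact [T2Space X] (hf : Continuous f)
    (hd : IsDistalMap f) {K : Set X} (hK : IsCompact K) {x : X} (hx : ∀ n, f^[n] x ∈ K) :
    x ∈ closure (range fun n : ℕ => f^[n + 1] x) := by
  set Y := closure (range fun n : ℕ => f^[n] x)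
  have hY : MapsTo f Y Y := MapsTo.closure
    (by rintro _ ⟨n, rfl⟩; exact ⟨n + 1, iterate_succ_apply' f n x⟩) hf
  have : CompactSpace Y :=
    isCompact_iff_compactSpace.1 (hK.closure_of_subset (range_subset_iff.2 hx))
  have hrec := (hd.restrict hY).mem_closure_range_iterate_succ (hf.restrict hY)
    ⟨x, subset_closure ⟨0, rfl⟩⟩
  exact map_mem_closure continuous_subtype_val hrec
    (by rintro _ ⟨n, rfl⟩; exact ⟨n, by simp [hY.iterate_restrict]⟩)

theorem IsDistalMap.image_iInter_preimage_iterate [T2Space X] (hf : Continuous f)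
    (hd : IsDistalMap f) {K : Set X} (hK : IsCompact K) :
    f '' ⋂ n : ℕ, f^[n] ⁻¹' K = ⋂ n : ℕ, f^[n] ⁻¹' K := by
  set T := ⋂ n : ℕ, f^[n] ⁻¹' K
  have hTK : T ⊆ K := iInter_subset _ 0
  have hT : IsCompact T :=
    hK.of_isClosed_subset (isClosed_iInter fun n => hK.isClosed.preimage (hf.iterate n)) hTK
  refine Subset.antisymm ?_ fun x hx => ?_
  · rintro _ ⟨x, hx, rfl⟩
    exact mem_iInter.2 fun n => by
      rw [mem_preimage, ← iterate_succ_apply]; exact mem_iInter.1 hx (n + 1)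
  · have horbit : ∀ m, f^[m] x ∈ T := fun m => mem_iInter.2 fun n => by
      rw [mem_preimage, ← iterate_add_apply]; exact mem_iInter.1 hx (n + m)
    have hrec := hd.mem_closure_range_iterate_succ_of_isCompact hf hT horbit
    refine (hT.image hf).isClosed.closure_subset_iff.2 ?_ hrec
    rintro _ ⟨n, rfl⟩
    exact ⟨f^[n] x, horbit n, (iterate_succ_apply' f n x).symm⟩

end Dynamics

section Homeomorph

variable {X : Type*} [TopologicalSpace X] [T2Space X] {K : Set X}

theorem IsDistalMap.exists_symm_mem_of_forall_iterate_mem {e : X ≃ₜ X} (hd : IsDistalMap e)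
    (hKc : IsCompact K) (hKo : IsOpen K) :
    ∃ m : ℕ, ∀ w, (∀ s ≤ m, e^[s] w ∈ K) → e.symm w ∈ K := by
  by_contra! h
  -- A common point `u` of the sets `A m` keeps its forward orbit in `K` while `e.symm u ∉ K`.
  set A : ℕ → Set X := fun m => (⋂ s ∈ Iic m, e^[s] ⁻¹' K) ∩ e.symm ⁻¹' Kᶜ
  have hA_closed (m : ℕ) : IsClosed (A m) :=
    (isClosed_biInter fun s _ => hKc.isClosed.preimage (e.continuous.iterate s)).inter
      (hKo.isClosed_compl.preimage e.symm.continuous)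
  have hA_compact (m : ℕ) : IsCompact (A m) :=
    hKc.of_isClosed_subset (hA_closed m) fun w hw => by
      simpa using mem_iInter₂.1 hw.1 0 (mem_Iic.2 m.zero_le)
  have hA_anti : Antitone A := antitone_nat_of_succ_le fun m w hw =>
    ⟨mem_iInter₂.2 fun s hs => mem_iInter₂.1 hw.1 s (Nat.le_succ_of_le hs), hw.2⟩
  have hA_nonempty (m : ℕ) : (A m).Nonempty := by
    obtain ⟨w, hw, hwK⟩ := h m
    exact ⟨w, mem_iInter₂.2 fun s hs => hw s hs, hwK⟩
  obtain ⟨u, hu⟩ := IsCompact.nonempty_iInter_of_directed_nonempty_isCompact_isClosed A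
    hA_anti.directed_ge hA_nonempty hA_compact hA_closed
  have hu_orbit : u ∈ ⋂ n : ℕ, e^[n] ⁻¹' K := mem_iInter.2 fun n =>
    mem_iInter₂.1 (mem_iInter.1 hu n).1 n (mem_Iic.2 le_rfl)
  rw [← hd.image_iInter_preimage_iterate e.continuous hKc] at hu_orbit
  obtain ⟨v, hv, rfl⟩ := hu_orbit
  exact (mem_iInter.1 hu 0).2 (by simpa using mem_iInter.1 hv 0)

theorem IsDistalMap.isOpen_iInter_preimage_iterate {e : X ≃ₜ X} (hd : IsDistalMap e.symm)
    (hKc : IsCompact K) (hKo : IsOpen K) : IsOpen (⋂ n : ℕ, e^[n] ⁻¹' K) := by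
  obtain ⟨m, hm⟩ := hd.exists_symm_mem_of_forall_iterate_mem (e := e.symm) hKc hKo
  have hC : IsOpen (⋂ s ∈ Iic m, e^[s] ⁻¹' K) :=
    (finite_Iic m).isOpen_biInter fun s _ => hKo.preimage (e.continuous.iterate s)
  -- The first `m + 1` conditions `e^[s] x ∈ K` already force all the others.
  convert hC using 1
  refine Subset.antisymm (fun x hx => mem_iInter₂.2 fun s _ => mem_iInter.1 hx s) fun x hx => ?_
  refine mem_iInter.2 fun n => ?_
  induction n using Nat.strong_induction_on with
  | _ n ih =>
    rcases le_or_gt n m with hn | hn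
    · exact mem_iInter₂.1 hx n hn
    · obtain ⟨k, rfl⟩ : ∃ k, n = k + 1 := ⟨n - 1, by omega⟩
      rw [mem_preimage, iterate_succ_apply']
      refine hm _ fun s hs => ?_
      obtain ⟨j, rfl⟩ : ∃ j, k = s + j := ⟨k - s, by omega⟩
      rw [iterate_add_apply, LeftInverse.iterate (f := e) e.symm_apply_apply s]
      exact ih j (by omega)

end Homeomorph

section InvariantCore

variable {A α : Type*} [Group A] [MulAction A α] {H K : Subgroup A} {L L' V : Set α}

def invariantCore (H : Subgroup A) (L : Set α) : Set α := {x | ∀ h ∈ H, h • x ∈ L}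

theorem invariantCore_subset : invariantCore H L ⊆ L := fun x hx => by
  simpa using hx 1 H.one_mem

theorem invariantCore_mono (hL : L ⊆ L') : invariantCore H L ⊆ invariantCore H L' :=
  fun _ hx h hh => hL (hx h hh)

theorem invariantCore_anti (hHK : H ≤ K) : invariantCore K L ⊆ invariantCore H L :=
  fun _ hx h hh => hx h (hHK hh)

theorem subset_invariantCore (hVL : V ⊆ L) (hV : H ≤ stabilizer A V) : V ⊆ invariantCore H L :=
  fun x hx h hh => hVL <| by
    rw [← mem_stabilizer_iff.1 (hV hh)]
    exact Set.smul_mem_smul_set hx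

theorem le_stabilizer_invariantCore_of_le_normalizer (hKH : K ≤ Subgroup.normalizer (H : Set A))
    (hK : K ≤ stabilizer A L) : K ≤ stabilizer A (invariantCore H L) := by
  refine (le_stabilizer_iff_smul_le _ _).2 fun k hk => Set.smul_set_subset_iff.2 fun x hx h hh => ?_
  have hconj : k⁻¹ * h * k ∈ H := by
    simpa using (Subgroup.mem_normalizer_iff''.1 (hKH hk) h).1 hh
  have : k • ((k⁻¹ * h * k) • x) ∈ L := by
    rw [← mem_stabilizer_iff.1 (hK hk)]
    exact Set.smul_mem_smul_set (hx _ hconj)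
  simpa [smul_smul, mul_assoc] using this

theorem le_stabilizer_invariantCore : H ≤ stabilizer A (invariantCore H L) :=
  (le_stabilizer_iff_smul_le _ _).2 fun k hk => Set.smul_set_subset_iff.2 fun x hx h hh => by
    simpa [smul_smul] using hx (h * k) (H.mul_mem hh hk)

theorem iInter_smul_subset_invariantCore {Λ : Subgroup H} [Finite (H ⧸ Λ)]
    (hV : Λ.map H.subtype ≤ stabilizer A V) :
    ⋂ c : H ⧸ Λ, (c.out : A) • V ⊆ invariantCore H V := by
  -- Write `h = l * c.out⁻¹` with `l ∈ Λ`, where `c` is the coset of `h⁻¹`.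
  intro x hx h hh
  obtain ⟨l, hl⟩ := QuotientGroup.mk_out_eq_mul Λ (⟨h, hh⟩⁻¹ : H)
  have hx' := Set.mem_smul_set_iff_inv_smul_mem.1
    (mem_iInter.1 hx (QuotientGroup.mk (⟨h, hh⟩⁻¹ : H)))
  rw [hl] at hx'
  have : ((l : H) : A) • ((((⟨h, hh⟩⁻¹ : H) * l : H) : A)⁻¹ • x) ∈ V := by
    rw [← mem_stabilizer_iff.1 (hV (Subgroup.mem_map_of_mem _ l.2))]
    exact Set.smul_mem_smul_set hx'
  simpa [smul_smul, mul_assoc] using this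

end InvariantCore

section Polycyclic

open Subgroup

theorem Subgroup.exists_mem_normalizer_le_sup_zpowers {H : Type*} [Group H] {A B : Subgroup H}
    (hAB : A ≤ B) [(A.subgroupOf B).Normal] [IsCyclic (B ⧸ A.subgroupOf B)] :
    ∃ t ∈ normalizer (A : Set H), B ≤ A ⊔ zpowers t := by
  obtain ⟨g', hg'⟩ := IsCyclic.exists_generator (α := B ⧸ A.subgroupOf B)
  obtain ⟨g, rfl⟩ := QuotientGroup.mk_surjective g'
  refine ⟨g, (normal_subgroupOf_iff_le_normalizer hAB).1 inferInstance g.2, fun x hx => ?_⟩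
  obtain ⟨k, hk⟩ := mem_zpowers_iff.1 (hg' (⟨x, hx⟩ : B))
  rw [← QuotientGroup.mk_zpow, QuotientGroup.eq, mem_subgroupOf] at hk
  rw [sup_comm, show x = (g : H) ^ k * (((g : H) ^ k)⁻¹ * x) by group]
  exact mul_mem_sup (zpow_mem_zpowers _ k) (by simpa using hk)

theorem IsPolycyclic.subgroup_induction {Q : Type*} [Group Q] {P : Subgroup Q}
    (hP : IsPolycyclic P) (p : Subgroup Q → Prop) (bot : p ⊥)
    (mono : ∀ H K : Subgroup Q, H ≤ K → p K → p H)
    (step : ∀ (H : Subgroup Q) (t : Q), t ∈ normalizer (H : Set Q) → p H → p (H ⊔ zpowers t)) :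
    p P := by
  obtain ⟨n, s, hs0, hsn, hs⟩ := hP
  suffices ∀ i, p ((s i).map P.subtype) by
    simpa [hsn, ← MonoidHom.range_eq_map] using this (Fin.last n)
  intro i
  induction i using Fin.induction with
  | zero => simpa [hs0] using bot
  | succ i ih =>
    obtain ⟨hle, hnormal, hcyclic⟩ := hs i
    obtain ⟨t, ht, hsucc⟩ := exists_mem_normalizer_le_sup_zpowers hle
    refine mono _ _ ?_ (step _ (t : Q) (le_normalizer_map _ (mem_map_of_mem _ ht)) ih)
    simpa only [Subgroup.map_sup, MonoidHom.map_zpowers, coe_subtype] using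
      map_mono (f := P.subtype) hsucc

theorem Subgroup.comap_sup_zpowers {G N : Type*} [Group G] [Group N] {f : G →* N}
    (hf : Function.Surjective f) (H : Subgroup N) (g : G) :
    (H ⊔ zpowers (f g)).comap f = H.comap f ⊔ zpowers g := by
  rw [← comap_sup_eq _ _ _ hf, ← MonoidHom.map_zpowers, comap_map_eq, sup_comm (zpowers g),
    ← sup_assoc, sup_eq_left.2 (ker_le_comap f H)]

end Polycyclic

theorem MulAut.coe_pow {M : Type*} [Mul M] (σ : MulAut M) (n : ℕ) : ⇑(σ ^ n) = (⇑σ)^[n] := by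
  induction n with
  | zero => rfl
  | succ n ih => rw [pow_succ', iterate_succ', ← ih]; rfl

theorem isDistalMap_of_forall_one_notMem_closure {G F : Type*} [Group G] [TopologicalSpace G]
    [IsTopologicalGroup G] [FunLike F G G] [MonoidHomClass F G G] {f : F}
    (hf : ∀ c : G, c ≠ 1 → (1 : G) ∉ closure (range fun n : ℕ => (⇑f)^[n] c)) :
    IsDistalMap ⇑f := by
  intro x y hxy z hz
  refine hf (x⁻¹ * y) (by rwa [ne_eq, inv_mul_eq_one]) ?_
  have := map_mem_closure (continuous_fst.inv.mul continuous_snd) hz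
    (t := range fun n : ℕ => (⇑f)^[n] (x⁻¹ * y))
    (by rintro _ ⟨n, rfl⟩; exact ⟨n, by simp [iterate_map_mul, iterate_map_inv]⟩)
  simpa using this

theorem exists_isCompact_isOpen_subset {X : Type*} [TopologicalSpace X] [LocallyCompactSpace X]
    [T2Space X] [TotallyDisconnectedSpace X] {x : X} {U : Set X} (hU : U ∈ 𝓝 x) :
    ∃ K, IsCompact K ∧ IsOpen K ∧ x ∈ K ∧ K ⊆ U := by
  obtain ⟨s, ⟨hs, hsc⟩, hsU⟩ := (compact_basis_nhds x).mem_iff.1 hU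
  obtain ⟨K, hK, hxK, hKs⟩ := loc_compact_Haus_tot_disc_of_zero_dim.mem_nhds_iff.1 hs
  exact ⟨K, hsc.of_isClosed_subset hK.isClosed hKs, hK.isOpen, hxK, hKs.trans hsU⟩

section TopAut

open Subgroup

variable {G : Type*} [Group G] [TopologicalSpace G] {Γ H K : Subgroup (TopAut G)}

theorem isEquicontinuousAutGroup_iff_invariantCore_mem_nhds :
    IsEquicontinuousAutGroup Γ ↔ ∀ U ∈ 𝓝 (1 : G), invariantCore Γ U ∈ 𝓝 (1 : G) := by
  refine ⟨fun h U hU => ?_, fun h U hU => ?_⟩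
  · obtain ⟨V, hV, hVU, hVinv⟩ := h U hU
    exact mem_of_superset hV
      (subset_invariantCore hVU fun γ hγ => mem_stabilizer_iff.2 (hVinv γ hγ))
  · exact ⟨_, h U hU, invariantCore_subset,
      fun γ hγ => mem_stabilizer_iff.1 (le_stabilizer_invariantCore hγ)⟩

theorem IsEquicontinuousAutGroup.mono (hK : IsEquicontinuousAutGroup K) (hHK : H ≤ K) :
    IsEquicontinuousAutGroup H :=
  isEquicontinuousAutGroup_iff_invariantCore_mem_nhds.2 fun U hU =>
    mem_of_superset (isEquicontinuousAutGroup_iff_invariantCore_mem_nhds.1 hK U hU)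
      (invariantCore_anti hHK)

theorem IsEquicontinuousAutGroup.sup (hH : IsEquicontinuousAutGroup H)
    (hK : IsEquicontinuousAutGroup K) (hKH : K ≤ normalizer (H : Set (TopAut G))) :
    IsEquicontinuousAutGroup (H ⊔ K) := by
  rw [isEquicontinuousAutGroup_iff_invariantCore_mem_nhds] at *
  intro U hU
  refine mem_of_superset (hH _ (hK U hU)) (subset_invariantCore
    (invariantCore_subset.trans invariantCore_subset) (sup_le le_stabilizer_invariantCore ?_))
  exact le_stabilizer_invariantCore_of_le_normalizer hKH le_stabilizer_invariantCore

theorem TopAut.smul_mem_nhds_one (γ : TopAut G) {V : Set G} (hV : V ∈ 𝓝 (1 : G)) :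
    γ • V ∈ 𝓝 (1 : G) := by
  rw [← Set.preimage_smul_inv]
  exact (γ⁻¹).2.1.continuousAt.preimage_mem_nhds (by rwa [map_one])

theorem IsEquicontinuousAutGroup.of_finiteIndex {Λ : Subgroup Γ} [Λ.FiniteIndex]
    (hΛ : IsEquicontinuousAutGroup (Λ.map Γ.subtype)) : IsEquicontinuousAutGroup Γ := by
  rw [isEquicontinuousAutGroup_iff_invariantCore_mem_nhds] at *
  intro U hU
  refine mem_of_superset (iInter_mem.2 fun c : Γ ⧸ Λ =>
    TopAut.smul_mem_nhds_one (c.out : TopAut G) (hΛ U hU)) ?_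
  exact (iInter_smul_subset_invariantCore le_stabilizer_invariantCore).trans
    (invariantCore_mono invariantCore_subset)

def TopAut.toHomeomorph (τ : TopAut G) : G ≃ₜ G where
  toEquiv := (τ : MulAut G).toEquiv
  continuous_toFun := τ.2.1
  continuous_invFun := τ.2.2

theorem IsDistalAut.inv_s2 {τ : TopAut G} (hτ : IsDistalAut τ) : IsDistalAut τ⁻¹ := by
  rwa [IsDistalAut, zpowers_inv]

theorem IsDistalAut.isDistalMap [IsTopologicalGroup G] {τ : TopAut G} (hτ : IsDistalAut τ) :
    IsDistalMap ⇑(τ : MulAut G) := by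
  refine isDistalMap_of_forall_one_notMem_closure fun c hc h1 => hτ c hc (closure_mono ?_ h1)
  rintro _ ⟨n, rfl⟩
  exact ⟨τ ^ n, pow_mem (mem_zpowers τ) n, by rw [coe_pow, MulAut.coe_pow]⟩

theorem IsDistalAut.isEquicontinuousAutGroup_zpowers [IsTopologicalGroup G]
    [LocallyCompactSpace G] [TotallyDisconnectedSpace G] {τ : TopAut G} (hτ : IsDistalAut τ) :
    IsEquicontinuousAutGroup (zpowers τ) := by
  rw [isEquicontinuousAutGroup_iff_invariantCore_mem_nhds]
  intro U hU
  obtain ⟨K, hKc, hKo, hK1, hKU⟩ := exists_isCompact_isOpen_subset hU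
  set e := TopAut.toHomeomorph τ
  have hT_open : IsOpen (⋂ n : ℕ, e^[n] ⁻¹' K) :=
    IsDistalMap.isOpen_iInter_preimage_iterate (e := e) hτ.inv_s2.isDistalMap hKc hKo
  have hT_inv : e '' ⋂ n : ℕ, e^[n] ⁻¹' K = ⋂ n : ℕ, e^[n] ⁻¹' K :=
    hτ.isDistalMap.image_iInter_preimage_iterate e.continuous hKc
  have hT_one : (1 : G) ∈ ⋂ n : ℕ, e^[n] ⁻¹' K :=
    mem_iInter.2 fun n => by
      rw [mem_preimage, show e^[n] = (⇑(τ : MulAut G))^[n] from rfl, iterate_map_one]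
      exact hK1
  exact mem_of_superset (hT_open.mem_nhds hT_one) (subset_invariantCore
    ((iInter_subset _ 0).trans hKU) (zpowers_le.2 (mem_stabilizer_iff.2 hT_inv)))

end TopAut

theorem lemma_2_3_general {G : Type*} [Group G] [TopologicalSpace G] [IsTopologicalGroup G]
    [TotallyDisconnectedSpace G] [LocallyCompactSpace G]
    (Γ : Subgroup ↥(TopAut G)) (hdistal : ∀ γ : ↥(TopAut G), γ ∈ Γ → IsDistalAut γ)
    (Γ₁ : Subgroup ↥Γ) [Γ₁.Normal]
    (hequi : IsEquicontinuousAutGroup (Γ₁.map Γ.subtype))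
    (hpoly : HasPolycyclicFiniteIndex (↥Γ ⧸ Γ₁)) :
    IsEquicontinuousAutGroup Γ := by
  obtain ⟨P, hP, hPfin⟩ := hpoly
  set π := QuotientGroup.mk' Γ₁
  have hπ : Function.Surjective π := QuotientGroup.mk'_surjective Γ₁
  have hlift : IsEquicontinuousAutGroup ((P.comap π).map Γ.subtype) := by
    refine hP.subgroup_induction (fun Q => IsEquicontinuousAutGroup ((Q.comap π).map Γ.subtype))
      ?_ ?_ ?_
    · rwa [MonoidHom.comap_bot, QuotientGroup.ker_mk']
    · exact fun Q Q' hQQ' hQ' => hQ'.mono (Subgroup.map_mono (Subgroup.comap_mono hQQ'))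
    · intro Q t ht hQ
      obtain ⟨t, rfl⟩ := hπ t
      rw [Subgroup.comap_sup_zpowers hπ, Subgroup.map_sup, MonoidHom.map_zpowers]
      refine hQ.sup (hdistal _ t.2).isEquicontinuousAutGroup_zpowers (Subgroup.zpowers_le.2 ?_)
      exact Subgroup.le_normalizer_map _
        (Subgroup.mem_map_of_mem _ (Subgroup.le_normalizer_comap _ ht))
  have : (P.comap π).FiniteIndex :=
    ⟨by rw [Subgroup.index_comap_of_surjective _ hπ]; exact hPfin.index_ne_zero⟩
  exact hlift.of_finiteIndex

/-- **Lemma 2.3.** Let `G` be a totally disconnected metrizable locally compact group and `Γ` a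
subgroup of `Aut(G)` all of whose elements are distal. If `Γ` has a normal equicontinuous
subgroup `Γ₁` with `Γ/Γ₁` containing a polycyclic subgroup of finite index, then `Γ` is
equicontinuous. -/
theorem lemma_2_3 {G : Type*} [Group G] [TopologicalSpace G] [IsTopologicalGroup G]
    [TotallyDisconnectedSpace G] [TopologicalSpace.MetrizableSpace G] [LocallyCompactSpace G]
    (Γ : Subgroup ↥(TopAut G)) (hdistal : ∀ γ : ↥(TopAut G), γ ∈ Γ → IsDistalAut γ)
    (Γ₁ : Subgroup ↥Γ) [Γ₁.Normal]
    (hequi : IsEquicontinuousAutGroup (Γ₁.map Γ.subtype))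
    (hpoly : HasPolycyclicFiniteIndex (↥Γ ⧸ Γ₁)) :
    IsEquicontinuousAutGroup Γ :=
  lemma_2_3_general Γ hdistal Γ₁ hequi hpoly
end

section
/- If a locally compact group G contains a normal finitely generated subgroup N and a compact set K such that KN = G, then G is a SIN group. -/
open Filter Topology MeasureTheory Pointwise

section GroupDefs
variable (G : Type*) [Group G] [TopologicalSpace G]

/-- `G` is distal: the group of inner automorphisms acts distally, i.e. for every `x ≠ 1`
the identity is not in the closure of the conjugacy class of `x`. -/
def IsDistalGroup : Prop :=
  ∀ x : G, x ≠ 1 → (1 : G) ∉ closure {y : G | ∃ g : G, g * x * g⁻¹ = y}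

variable {G} in
/-- An element `z` of `G` is distal: the cyclic group generated by the inner automorphism
`x ↦ z x z⁻¹` acts distally on `G`. -/
def IsDistalElement (z : G) : Prop :=
  ∀ x : G, x ≠ 1 → (1 : G) ∉ closure {y : G | ∃ n : ℤ, z ^ n * x * (z ^ n)⁻¹ = y}

/-- `G` is a SIN group: there is a neighbourhood base at the identity consisting of
conjugation-invariant sets. -/
def IsSINGroup : Prop :=
  ∀ U ∈ nhds (1 : G), ∃ V ∈ nhds (1 : G), V ⊆ U ∧ ∀ g : G, (fun x => g * x * g⁻¹) '' V = V

variable {G} in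
/-- The contraction subgroup of an element `z`:
all `x` with `zⁿ x z⁻ⁿ → 1` as `n → ∞`. -/
def ContractionElt (z : G) : Set G :=
  {x : G | Tendsto (fun n : ℕ => z ^ n * x * (z ^ n)⁻¹) atTop (nhds 1)}

/-- A topological group is compactly generated:
some compact subset generates it as a group. -/
def IsCompactlyGeneratedGroup : Prop :=
  ∃ K : Set G, IsCompact K ∧ Subgroup.closure K = ⊤

end GroupDefs

/-!
Conjugation-invariant neighbourhoods of `1` pull back along `G → G/{1}‾`, so we may assume `G`
Hausdorff; being locally compact, it is then a Baire space. For `y ∈ N` the conjugacy class of `y`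
lies in the countable group `N`, so the closed centralizer `C(y)` has countably many cosets; by
Baire one of them has interior, so `C(y)` is open. As `N` is finitely generated, its centralizer
is then a neighbourhood of `1`, on which conjugation by `g = k n` (`k ∈ K`, `n ∈ N`) agrees with
conjugation by `k`; and conjugation by the compact set `K` is equicontinuous at `1`.
-/

section Countability

variable {G : Type*} [Group G]

theorem Group.FG.countable [Group.FG G] : Countable G := by
  obtain ⟨α, _, φ, hφ⟩ := Group.fg_iff_exists_freeGroup_hom_surjective_finite.1 ‹Group.FG G›
  exact hφ.countable

theorem Subgroup.countable_quotient_centralizer_of_mem {M : Subgroup G} [hM : M.Normal]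
    [Countable M] {y : G} (hy : y ∈ M) : Countable (G ⧸ centralizer {y}) := by
  let conjugate (q : G ⧸ centralizer {y}) : M := ⟨q.out * y * q.out⁻¹, hM.conj_mem y hy _⟩
  refine Function.Injective.countable (f := conjugate) fun q₁ q₂ h => ?_
  have hconj : q₁.out * y * q₁.out⁻¹ = q₂.out * y * q₂.out⁻¹ := congrArg Subtype.val h
  rw [← QuotientGroup.out_eq' q₁, ← QuotientGroup.out_eq' q₂, QuotientGroup.eq,
    mem_centralizer_singleton_iff]
  calc q₁.out⁻¹ * q₂.out * y = q₁.out⁻¹ * (q₂.out * y * q₂.out⁻¹) * q₂.out := by group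
    _ = y * (q₁.out⁻¹ * q₂.out) := by rw [← hconj]; group

end Countability

section Topological

variable {G : Type*} [Group G] [TopologicalSpace G]

theorem isSINGroup_of_forall_conj_mem
    (h : ∀ U ∈ 𝓝 (1 : G), ∃ V ∈ 𝓝 (1 : G), ∀ g : G, ∀ v ∈ V, g * v * g⁻¹ ∈ U) :
    IsSINGroup G := by
  intro U hU
  obtain ⟨V, hV, hVU⟩ := h U hU
  have conj_conj (a g v : G) : a * (g * v * g⁻¹) * a⁻¹ = (a * g) * v * (a * g)⁻¹ := by group
  refine ⟨{w | ∃ g, ∃ v ∈ V, g * v * g⁻¹ = w}, mem_of_superset hV fun v hv => ⟨1, v, hv, by group⟩,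
    fun _ ⟨g, v, hv, hw⟩ => hw ▸ hVU g v hv, fun a => ?_⟩
  refine (Set.image_subset_iff.2 ?_).antisymm fun w ⟨g, v, hv, hw⟩ => ?_
  · rintro _ ⟨g, v, hv, rfl⟩
    exact ⟨a * g, v, hv, (conj_conj a g v).symm⟩
  · refine ⟨a⁻¹ * g * v * (a⁻¹ * g)⁻¹, ⟨a⁻¹ * g, v, hv, rfl⟩, ?_⟩
    rw [← hw]
    group

variable [IsTopologicalGroup G]

theorem IsSINGroup.of_separationQuotient (h : IsSINGroup (SeparationQuotient G)) :
    IsSINGroup G := by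
  refine isSINGroup_of_forall_conj_mem fun U hU => ?_
  rw [← SeparationQuotient.comap_mk_nhds_mk, SeparationQuotient.mk_one] at hU
  obtain ⟨U', hU', hU'U⟩ := hU
  obtain ⟨V', hV', hV'U', hV'conj⟩ := h U' hU'
  refine ⟨SeparationQuotient.mk ⁻¹' V',
    SeparationQuotient.continuous_mk.continuousAt.preimage_mem_nhds (by simpa using hV'),
    fun g v hv => hU'U (hV'U' ?_)⟩
  rw [← hV'conj (SeparationQuotient.mk g)]
  exact ⟨_, hv, by simp⟩

theorem IsCompact.eventually_forall_conj_mem {K U : Set G} (hK : IsCompact K)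
    (hU : U ∈ 𝓝 (1 : G)) : ∀ᶠ v in 𝓝 (1 : G), ∀ k ∈ K, k * v * k⁻¹ ∈ U :=
  hK.eventually_forall_of_forall_eventually fun k _ =>
    (show Continuous fun p : G × G => p.2 * p.1 * p.2⁻¹ by fun_prop).continuousAt
      (x := (1, k)) (by simpa using hU)

theorem isSINGroup_of_centralizer_mem_nhds_one {N : Subgroup G}
    (hN : (Subgroup.centralizer (N : Set G) : Set G) ∈ 𝓝 1) {K : Set G} (hK : IsCompact K)
    (hKN : K * (N : Set G) = Set.univ) : IsSINGroup G := by
  refine isSINGroup_of_forall_conj_mem fun U hU => ?_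
  refine ⟨_, inter_mem (hK.eventually_forall_conj_mem hU) hN, fun g v ⟨hvU, hvN⟩ => ?_⟩
  obtain ⟨k, hk, n, hn, rfl⟩ : g ∈ K * (N : Set G) := hKN ▸ Set.mem_univ g
  have hnv : n * v = v * n := Subgroup.mem_centralizer_iff.1 hvN n hn
  have hconj : k * n * v * (k * n)⁻¹ = k * v * k⁻¹ := by
    rw [show k * n * v * (k * n)⁻¹ = k * (n * v) * n⁻¹ * k⁻¹ by group, hnv]
    group
  exact hconj ▸ hvU k hk

theorem Subgroup.isOpen_of_isClosed_of_countable_quotient [BaireSpace G] (H : Subgroup G)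
    [Countable (G ⧸ H)] (hH : IsClosed (H : Set G)) : IsOpen (H : Set G) := by
  have hcover : ⋃ q : G ⧸ H, q.out • (H : Set G) = Set.univ := by
    refine Set.eq_univ_of_forall fun g => Set.mem_iUnion.2 ⟨g, ?_⟩
    rw [mem_leftCoset_iff]
    exact QuotientGroup.eq.1 (QuotientGroup.out_eq' _)
  obtain ⟨q, x, hx⟩ :=
    nonempty_interior_of_iUnion_of_closed (fun q : G ⧸ H => hH.leftCoset q.out) hcover
  refine H.isOpen_of_mem_nhds (g := q.out⁻¹ * x) ?_
  rw [← smul_mem_nhds_smul_iff q.out, smul_eq_mul, mul_inv_cancel_left]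
  exact mem_interior_iff_mem_nhds.1 hx

variable [T2Space G] [BaireSpace G]

theorem Subgroup.isOpen_centralizer_of_mem {M : Subgroup G} [M.Normal] [Countable M] {y : G}
    (hy : y ∈ M) : IsOpen (centralizer {y} : Set G) :=
  have := countable_quotient_centralizer_of_mem hy
  (centralizer {y}).isOpen_of_isClosed_of_countable_quotient (Set.isClosed_centralizer {y})

theorem Subgroup.centralizer_mem_nhds_one_of_fg {N : Subgroup G} [N.Normal] [Group.FG N] :
    (centralizer (N : Set G) : Set G) ∈ 𝓝 1 := by
  have : Countable N := Group.FG.countable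
  obtain ⟨S, hSN, hS⟩ := (fg_iff N).1 ((Group.fg_iff_subgroup_fg N).1 ‹_›)
  rw [← hSN, centralizer_closure, centralizer_eq_iInf]
  simp only [coe_iInf]
  exact (biInter_mem hS).2 fun s hs =>
    (isOpen_centralizer_of_mem (hSN ▸ subset_closure hs)).mem_nhds (one_mem _)

end Topological

/-- **Lemma 2.11.** If a locally compact group `G` contains a normal finitely generated
subgroup `N` and a compact set `K` such that `K * N = G`, then `G` is a SIN group. -/
theorem lemma_2_11 {G : Type*} [Group G] [TopologicalSpace G] [IsTopologicalGroup G]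
    [LocallyCompactSpace G]
    (N : Subgroup G) [N.Normal] (hNfg : Group.FG ↥N)
    (K : Set G) (hK : IsCompact K) (hKN : K * (N : Set G) = Set.univ) :
    IsSINGroup G := by
  refine IsSINGroup.of_separationQuotient ?_
  have : WeaklyLocallyCompactSpace (SeparationQuotient G) :=
    SeparationQuotient.isOpenQuotientMap_mk.weaklyLocallyCompactSpace
  let π : G →* SeparationQuotient G := SeparationQuotient.mkMonoidHom
  have hπ : Function.Surjective π := SeparationQuotient.surjective_mk
  have : (N.map π).Normal := ‹N.Normal›.map π hπ
  have : Group.FG (N.map π) := Group.fg_of_surjective (hG := hNfg) (π.subgroupMap_surjective N)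
  refine isSINGroup_of_centralizer_mem_nhds_one
    (Subgroup.centralizer_mem_nhds_one_of_fg (N := N.map π))
    (hK.image SeparationQuotient.continuous_mk) ?_
  rw [Subgroup.coe_map, show SeparationQuotient.mk = ⇑π from rfl, ← Set.image_mul, hKN,
    Set.image_univ_of_surjective hπ]
end

section
/- If a compactly generated totally disconnected locally compact group G contains a closed cocompact normal SIN subgroup, then G is a SIN group. -/
open Filter Topology MeasureTheory Pointwise

/-!
Write `G = N C` with `C` compact. A neighbourhood of `1` invariant under conjugation by `N` then
contains one invariant under all of `G`: the set of points whose `C`-conjugates stay inside it,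
which is a neighbourhood of `1` by the tube lemma. To find a small `N`-invariant neighbourhood
inside `U`, take a compact open subgroup `Q ⊆ U` (van Dantzig). The SIN property of `N` makes the
normal core `M` of `Q` open in `N`. By Schreier's argument `N` is generated by the compact set
`N ∩ C E C⁻¹`, where `E` generates `G`, so `N / M` is finitely generated and every element close
to `1` centralises `N` modulo `M`. An open subgroup `Q'` of such elements inside `Q` gives the
`N`-invariant open subgroup `Q' M ⊆ Q`.
-/

open Set
open scoped commutatorElement

section Group

variable {G : Type*} [Group G]

def conjCore (S : Set G) : Set G := {x | ∀ g : G, g * x * g⁻¹ ∈ S}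

lemma conjCore_subset (S : Set G) : conjCore S ⊆ S := fun x hx => by
  simpa using hx 1

lemma conjCore_mono {S T : Set G} (h : S ⊆ T) : conjCore S ⊆ conjCore T :=
  fun _ hx g => h (hx g)

lemma image_conj_conjCore (S : Set G) (g : G) :
    (fun x => g * x * g⁻¹) '' conjCore S = conjCore S := by
  refine Subset.antisymm ?_ fun x hx => ⟨g⁻¹ * x * g, fun h => ?_, by group⟩
  · rintro _ ⟨x, hx, rfl⟩ h
    simpa only [mul_assoc, mul_inv_rev] using hx (h * g)
  · simpa only [mul_assoc, mul_inv_rev, inv_inv] using hx (h * g⁻¹)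

lemma mem_conjCore_of_forall_conj_mem {N : Subgroup G} {C S : Set G}
    (hNC : (N : Set G) * C = univ) (hS : ∀ n ∈ N, ∀ x ∈ S, n * x * n⁻¹ ∈ S) {x : G}
    (hx : ∀ c ∈ C, c * x * c⁻¹ ∈ S) : x ∈ conjCore S := by
  intro g
  obtain ⟨n, hn, c, hc, rfl⟩ := mem_mul.1 (hNC.symm.subset (mem_univ g))
  simpa only [mul_assoc, mul_inv_rev] using hS n hn _ (hx c hc)

theorem Subgroup.le_closure_inter_mul_mul_inv {N : Subgroup G} {C E : Set G}
    (hE : Submonoid.closure E = ⊤) (hE1 : 1 ∈ E) (hC1 : 1 ∈ C)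
    (hNC : (N : Set G) * C = univ) :
    N ≤ closure ((N : Set G) ∩ (C * E * C⁻¹)) := by
  set P := closure ((N : Set G) ∩ (C * E * C⁻¹))
  have hCEC : ∀ c ∈ C, ∀ e ∈ E, ∀ c' ∈ C, c * e * c'⁻¹ ∈ C * E * C⁻¹ := fun c hc e he c' hc' =>
    mul_mem_mul (mul_mem_mul hc he) (inv_mem_inv.2 hc')
  -- Reading a word in `E` from left to right, keep track of its coset representative in `C`.
  have key : ∀ x : G, ∀ c ∈ C, ∃ c' ∈ C, c * x * c'⁻¹ ∈ P := by
    intro x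
    induction (hE.symm ▸ Submonoid.mem_top x : x ∈ Submonoid.closure E) using
      Submonoid.closure_induction with
    | mem e he =>
      intro c hc
      obtain ⟨n, hn, c', hc', hnc'⟩ := mem_mul.1 (hNC.symm.subset (mem_univ (c * e)))
      have hn_eq : n = c * e * c'⁻¹ := by rw [← hnc']; group
      exact ⟨c', hc', subset_closure ⟨hn_eq ▸ hn, hCEC c hc e he c' hc'⟩⟩
    | one => exact fun c hc => ⟨c, hc, by simp⟩
    | mul a b _ _ iha ihb =>
      intro c hc
      obtain ⟨c₁, hc₁, ha⟩ := iha c hc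
      obtain ⟨c₂, hc₂, hb⟩ := ihb c₁ hc₁
      exact ⟨c₂, hc₂, by simpa only [mul_assoc, inv_mul_cancel_left] using mul_mem ha hb⟩
  intro x hx
  have hPN : P ≤ N := (closure_le N).2 inter_subset_left
  obtain ⟨c, hc, hxc⟩ := key x 1 hC1
  rw [one_mul] at hxc
  have hcN : c ∈ N := by simpa using N.mul_mem (N.inv_mem (hPN hxc)) hx
  have hcP : c ∈ P := subset_closure ⟨hcN, by simpa using hCEC c hc 1 hE1 1 hC1⟩
  simpa using mul_mem hxc hcP

lemma commutatorElement_mem_iff_commute {M : Subgroup G} [M.Normal] {g h : G} :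
    ⁅g, h⁆ ∈ M ↔ Commute (g : G ⧸ M) h := by
  rw [← QuotientGroup.eq_one_iff, ← commutatorElement_eq_one_iff_commute]
  exact Iff.rfl

lemma commutatorElement_mem_of_le_closure {N M : Subgroup G} [M.Normal] {t : Set G}
    (hN : N ≤ Subgroup.closure (t * (M : Set G))) {g : G} (hg : ∀ y ∈ t, ⁅g, y⁆ ∈ M) :
    ∀ n ∈ N, ⁅g, n⁆ ∈ M := by
  let S := (Subgroup.centralizer {(g : G ⧸ M)}).comap (QuotientGroup.mk' M)
  have hS : ∀ n, n ∈ S ↔ ⁅g, n⁆ ∈ M := fun n => by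
    rw [commutatorElement_mem_iff_commute]
    simp [S, Subgroup.mem_centralizer_singleton_iff, Commute, SemiconjBy, eq_comm]
  have htM : t * (M : Set G) ⊆ S := by
    intro x hx
    obtain ⟨y, hy, m, hm, rfl⟩ := mem_mul.1 hx
    rw [SetLike.mem_coe, hS, commutatorElement_mem_iff_commute, QuotientGroup.mk_mul,
      (QuotientGroup.eq_one_iff m).2 hm, mul_one, ← commutatorElement_mem_iff_commute]
    exact hg y hy
  exact fun n hn => (hS n).1 ((Subgroup.closure_le S).2 htM (hN hn))

lemma conj_mem_sup_of_commutatorElement_mem {Q M : Subgroup G} [M.Normal] {n : G}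
    (hQ : ∀ q ∈ Q, ⁅q, n⁆ ∈ M) : ∀ x ∈ Q ⊔ M, n * x * n⁻¹ ∈ Q ⊔ M := by
  suffices Q ⊔ M ≤ (Q ⊔ M).comap (MulAut.conj n).toMonoidHom by
    intro x hx; simpa using this hx
  refine sup_le (fun q hq => ?_) (fun m hm => ?_)
  · have : n * q * n⁻¹ = ⁅q, n⁆⁻¹ * q := by group
    simpa [this] using mul_mem (Subgroup.mem_sup_right (inv_mem (hQ q hq)))
      (Subgroup.mem_sup_left hq)
  · simpa using Subgroup.mem_sup_right (‹M.Normal›.conj_mem m hm n)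

end Group

lemma IsSINGroup.exists_conj_invariant_subset {G : Type*} [Group G] [TopologicalSpace G]
    {N : Subgroup G} (hN : IsSINGroup N) {U : Set G}
    (hU : U ∈ 𝓝[(N : Set G)] 1) :
    ∃ V ∈ 𝓝[(N : Set G)] 1, V ⊆ U ∧ ∀ n ∈ N, ∀ x ∈ V, n * x * n⁻¹ ∈ V := by
  obtain ⟨V, hV, hVU, hVconj⟩ := hN _ (preimage_coe_mem_nhds_subtype.2 hU)
  refine ⟨(↑) '' V, mem_nhds_subtype_iff_nhdsWithin.1 hV, image_subset_iff.2 hVU, ?_⟩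
  rintro n hn _ ⟨x, hx, rfl⟩
  exact ⟨_, (hVconj ⟨n, hn⟩).subset ⟨x, hx, rfl⟩, rfl⟩

section TopologicalGroup

variable {G : Type*} [Group G] [TopologicalSpace G] [IsTopologicalGroup G]

lemma eventually_forall_conj_mem {C S : Set G} (hC : IsCompact C) (hS : S ∈ 𝓝 1) :
    ∀ᶠ x in 𝓝 1, ∀ c ∈ C, c * x * c⁻¹ ∈ S :=
  hC.eventually_forall_of_forall_eventually fun c _ => by
    have hcont : Continuous fun p : G × G => p.2 * p.1 * p.2⁻¹ := by fun_prop
    exact hcont.continuousAt.preimage_mem_nhds (by simpa using hS)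

lemma conjCore_mem_nhdsWithin {N : Subgroup G} {C T S : Set G} (hC : IsCompact C)
    (hNC : (N : Set G) * C = univ) (hT : ∀ g : G, ∀ x ∈ T, g * x * g⁻¹ ∈ T)
    (hS : S ∈ 𝓝[T] 1) (hSN : ∀ n ∈ N, ∀ x ∈ S, n * x * n⁻¹ ∈ S) :
    conjCore S ∈ 𝓝[T] 1 := by
  obtain ⟨O, hO, hOS⟩ := mem_nhdsWithin_iff_exists_mem_nhds_inter.1 hS
  filter_upwards [nhdsWithin_le_nhds (eventually_forall_conj_mem hC hO), self_mem_nhdsWithin]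
    with x hxO hxT
  exact mem_conjCore_of_forall_conj_mem hNC hSN fun c hc => hOS ⟨hxO c hc, hT c x hxT⟩

lemma isSINGroup_of_isCompact_mul_eq_univ {N : Subgroup G} {C : Set G} (hC : IsCompact C)
    (hNC : (N : Set G) * C = univ)
    (h : ∀ U ∈ 𝓝 (1 : G), ∃ S ∈ 𝓝 (1 : G), S ⊆ U ∧ ∀ n ∈ N, ∀ x ∈ S, n * x * n⁻¹ ∈ S) :
    IsSINGroup G := by
  intro U hU
  obtain ⟨S, hS, hSU, hSN⟩ := h U hU
  have hcore := conjCore_mem_nhdsWithin (T := univ) hC hNC (fun _ _ _ => mem_univ _)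
    (by rwa [nhdsWithin_univ]) hSN
  rw [nhdsWithin_univ] at hcore
  exact ⟨conjCore S, hcore, (conjCore_subset S).trans hSU, image_conj_conjCore S⟩

theorem exists_openSubgroup_subset [LocallyCompactSpace G] [TotallyDisconnectedSpace G]
    {U : Set G} (hU : U ∈ 𝓝 1) : ∃ H : OpenSubgroup G, (H : Set G) ⊆ U := by
  obtain ⟨K, hK, hKU, hKc⟩ := local_compact_nhds hU
  obtain ⟨W, hWc, h1W, hWK⟩ := loc_compact_Haus_tot_disc_of_zero_dim.mem_nhds_iff.1 hK
  have hWcpt : IsCompact W := hKc.of_isClosed_subset hWc.isClosed hWK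
  -- The stabiliser of a compact open `W ∋ 1` under left translation is an open subgroup inside `W`.
  let H := MulAction.stabilizer G W
  obtain ⟨V, hV, hVW⟩ := compact_open_separated_mul_left hWcpt hWc.isOpen subset_rfl
  have hVH : V ∩ V⁻¹ ⊆ H := fun g ⟨hg, hg'⟩ =>
    (smul_set_subset_mul hg |>.trans hVW).antisymm
      (subset_smul_set_iff.2 (smul_set_subset_mul (mem_inv.1 hg') |>.trans hVW))
  have hH : (H : Set G) ∈ 𝓝 1 := mem_of_superset (inter_mem hV (inv_mem_nhds_one G hV)) hVH
  refine ⟨⟨H, H.isOpen_of_mem_nhds hH⟩, fun g hg => hKU (hWK ?_)⟩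
  simpa [MulAction.mem_stabilizer_iff.1 hg] using smul_mem_smul_set (a := g) h1W

theorem exists_isCompact_one_mem_mul_eq_univ [LocallyCompactSpace G] (N : Subgroup G) [N.Normal]
    [CompactSpace (G ⧸ N)] : ∃ C : Set G, IsCompact C ∧ 1 ∈ C ∧ (N : Set G) * C = univ := by
  obtain ⟨B, hB, hB1⟩ := exists_compact_mem_nhds (1 : G)
  have h1B : (1 : G) ∈ interior B := mem_interior_iff_mem_nhds.2 hB1
  obtain ⟨t, ht⟩ := isCompact_univ.elim_finite_subcover
    (fun g : G => ((↑) : G → G ⧸ N) '' (g • interior B))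
    (fun g => QuotientGroup.isOpenMap_coe _ (isOpen_interior.smul g))
    (fun q _ => by
      obtain ⟨g, rfl⟩ := QuotientGroup.mk_surjective q
      have hg : g ∈ g • interior B := by simpa using smul_mem_smul_set (a := g) h1B
      exact mem_iUnion.2 ⟨g, g, hg, rfl⟩)
  refine ⟨insert 1 (t : Set G) * B, ((t.finite_toSet.insert 1).isCompact.mul hB),
    ⟨1, mem_insert _ _, 1, mem_of_mem_nhds hB1, one_mul 1⟩, ?_⟩
  rw [← Subgroup.set_mul_normal_comm, eq_univ_iff_forall]
  intro x
  obtain ⟨g, hg, _, ⟨b, hb, rfl⟩, hgb⟩ := mem_iUnion₂.1 (ht (mem_univ (x : G ⧸ N)))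
  exact ⟨g * b, mul_mem_mul (mem_insert_of_mem _ hg) (interior_subset hb), _,
    QuotientGroup.eq.1 hgb, mul_inv_cancel_left _ _⟩

lemma IsCompact.exists_finite_subset_mul {N M : Subgroup G} {L : Set G} (hL : IsCompact L)
    (hLN : L ⊆ N) (hM : (M : Set G) ∈ 𝓝[(N : Set G)] 1) :
    ∃ t : Set G, t.Finite ∧ t ⊆ N ∧ L ⊆ t * M := by
  obtain ⟨O, hO, hOM⟩ := mem_nhdsWithin_iff_exists_mem_nhds_inter.1 hM
  obtain ⟨t, htL, hLt⟩ := hL.elim_nhds_subcover (fun y => {x | y⁻¹ * x ∈ O}) fun y _ =>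
    (continuous_const.mul continuous_id).continuousAt.preimage_mem_nhds (by simpa using hO)
  refine ⟨t, t.finite_toSet, fun y hy => hLN (htL y hy), fun x hx => ?_⟩
  obtain ⟨y, hy, hyx⟩ := mem_iUnion₂.1 (hLt hx)
  have hyx_N : y⁻¹ * x ∈ N := N.mul_mem (N.inv_mem (hLN (htL y hy))) (hLN hx)
  exact ⟨y, hy, y⁻¹ * x, hOM ⟨hyx, hyx_N⟩, mul_inv_cancel_left y x⟩

theorem eventually_forall_commutatorElement_mem {N M : Subgroup G} [N.Normal] [M.Normal]
    {L : Set G} (hL : IsCompact L) (hLN : L ⊆ N) (hNL : N ≤ Subgroup.closure L)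
    (hM : (M : Set G) ∈ 𝓝[(N : Set G)] 1) :
    ∀ᶠ g in 𝓝 (1 : G), ∀ n ∈ N, ⁅g, n⁆ ∈ M := by
  obtain ⟨t, ht, htN, hLt⟩ := hL.exists_finite_subset_mul hLN hM
  have hcomm : ∀ y ∈ t, ∀ᶠ g in 𝓝 (1 : G), ⁅g, y⁆ ∈ M := fun y hy => by
    have hcont : Continuous fun g : G => ⁅g, y⁆ := by
      simp only [commutatorElement_def]; fun_prop
    refine tendsto_nhdsWithin_of_tendsto_nhds_of_eventually_within _ ?_
      (Eventually.of_forall fun g => ?_) |>.eventually_mem hM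
    · simpa using hcont.tendsto 1
    · rw [commutatorElement_def]
      exact N.mul_mem (‹N.Normal›.conj_mem y (htN hy) g) (N.inv_mem (htN hy))
  filter_upwards [(ht.eventually_all).2 hcomm] with g hg
  exact commutatorElement_mem_of_le_closure (hNL.trans (Subgroup.closure_mono hLt)) hg

lemma IsCompactlyGeneratedGroup.exists_submonoid_closure_eq_top (h : IsCompactlyGeneratedGroup G) :
    ∃ E : Set G, IsCompact E ∧ 1 ∈ E ∧ Submonoid.closure E = ⊤ := by
  obtain ⟨E, hE, hEG⟩ := h
  refine ⟨insert 1 (E ∪ E⁻¹), (hE.union hE.inv).insert 1, mem_insert _ _, top_unique ?_⟩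
  rw [← Subgroup.top_toSubmonoid, ← hEG, Subgroup.closure_toSubmonoid]
  exact Submonoid.closure_mono (subset_insert _ _)

end TopologicalGroup

/-- **Proposition 2.12.** If a compactly generated totally disconnected locally compact group
`G` contains a closed cocompact normal SIN subgroup, then `G` is a SIN group. -/
theorem proposition_2_12 {G : Type*} [Group G] [TopologicalSpace G] [IsTopologicalGroup G]
    [TotallyDisconnectedSpace G] [LocallyCompactSpace G]
    (hcg : IsCompactlyGeneratedGroup G)
    (N : Subgroup G) [N.Normal] (hNclosed : IsClosed (N : Set G))
    (hNcocompact : CompactSpace (G ⧸ N)) (hNsin : IsSINGroup ↥N) :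
    IsSINGroup G := by
  obtain ⟨C, hC, hC1, hNC⟩ := exists_isCompact_one_mem_mul_eq_univ N
  obtain ⟨E, hE, hE1, hEG⟩ := hcg.exists_submonoid_closure_eq_top
  let L := (N : Set G) ∩ (C * E * C⁻¹)
  have hL : IsCompact L := ((hC.mul hE).mul hC.inv).inter_left hNclosed
  have hNL : N ≤ Subgroup.closure L := Subgroup.le_closure_inter_mul_mul_inv hEG hE1 hC1 hNC
  refine isSINGroup_of_isCompact_mul_eq_univ hC hNC fun U hU => ?_
  obtain ⟨Q, hQU⟩ := exists_openSubgroup_subset hU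
  obtain ⟨V, hV, hVQ, hVN⟩ :=
    hNsin.exists_conj_invariant_subset (mem_nhdsWithin_of_mem_nhds Q.mem_nhds_one)
  let M := (Q : Subgroup G).normalCore
  have hM : (M : Set G) ∈ 𝓝[(N : Set G)] 1 :=
    mem_of_superset (conjCore_mem_nhdsWithin hC hNC (fun g x hx => ‹N.Normal›.conj_mem x hx g)
      hV hVN) (conjCore_mono hVQ)
  obtain ⟨Q', hQ'⟩ := exists_openSubgroup_subset
    (inter_mem Q.mem_nhds_one (eventually_forall_commutatorElement_mem hL inter_subset_left hNL hM))
  let P : Subgroup G := (Q' : Subgroup G) ⊔ M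
  have hPQ : P ≤ Q := sup_le (fun q hq => (hQ' hq).1) (Subgroup.normalCore_le _)
  exact ⟨P, mem_of_superset Q'.mem_nhds_one fun _ => Subgroup.mem_sup_left,
    (SetLike.coe_subset_coe.2 hPQ).trans hQU,
    fun n hn => conj_mem_sup_of_commutatorElement_mem fun q hq => (hQ' hq).2 n hn⟩
end

section
/- Let G be a locally compact compactly generated totally disconnected solvable group. Then there exists a closed normal cocompact subgroup N of G such that the closure of the commutator subgroup [G,G] is contained in N and the quotient N/cl([G,G]) is topologically isomorphic to ℤ^d (with the discrete topology) for some integer d ≥ 0. -/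
/-!
Put `C = cl([G,G])`, so that `Q = G/C` is an abelian, compactly generated Hausdorff group.
By van Dantzig's theorem `G` has a compact open subgroup (the stabiliser of a compact open
neighbourhood of `1`), whose image `V` in `Q` is compact open. Then `Q/V` is discrete and
compactly generated, hence a finitely generated abelian group; dividing out its finite torsion
gives a continuous surjection `χ : Q → ℤ^d` with compact kernel, and since `ℤ^d` is free, `χ` has
a section `g`. The preimage `N` of the lattice `g(ℤ^d)` in `G` works: `χ` identifies `N/C` with
`ℤ^d`, and `G/N` is the image of the compact set `ker χ` because `Q = ker χ · g(ℤ^d)`.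
-/

open Filter Topology MeasureTheory Pointwise

section VanDantzig

variable {G : Type*} [Group G] [TopologicalSpace G] [IsTopologicalGroup G]

theorem isOpen_stabilizer_of_isCompact_of_isOpen {W : Set G} (hWc : IsCompact W)
    (hWo : IsOpen W) : IsOpen (MulAction.stabilizer G W : Set G) := by
  obtain ⟨V, hV, hVW⟩ := compact_open_separated_mul_left hWc hWo subset_rfl
  refine Subgroup.isOpen_of_mem_nhds _ (g := 1)
    (Filter.mem_of_superset (Filter.inter_mem hV (inv_mem_nhds_one G hV)) ?_)
  rintro g ⟨hg, hg'⟩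
  have smul_subset {h : G} (hh : h ∈ V) : h • W ⊆ W :=
    (Set.smul_set_subset_mul hh).trans hVW
  exact (smul_subset hg).antisymm (Set.subset_smul_set_iff.mpr (smul_subset hg'))

theorem exists_isOpen_isCompact_subgroup [LocallyCompactSpace G] [TotallyDisconnectedSpace G] :
    ∃ U : Subgroup G, IsOpen (U : Set G) ∧ IsCompact (U : Set G) := by
  obtain ⟨K, hKc, hK⟩ := exists_compact_mem_nhds (1 : G)
  obtain ⟨W, hWclopen, h1W, hWK⟩ := loc_compact_Haus_tot_disc_of_zero_dim.exists_subset_of_mem_open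
    (mem_interior_iff_mem_nhds.mpr hK) isOpen_interior
  have hWc : IsCompact W := hKc.of_isClosed_subset hWclopen.isClosed (hWK.trans interior_subset)
  have hU := isOpen_stabilizer_of_isCompact_of_isOpen hWc hWclopen.isOpen
  refine ⟨_, hU, hWc.of_isClosed_subset (Subgroup.isClosed_of_isOpen _ hU) fun g hg => ?_⟩
  simpa [MulAction.mem_stabilizer_iff.mp hg] using Set.smul_mem_smul_set (a := g) h1W

end VanDantzig

theorem IsCompactlyGeneratedGroup.of_surjective {G H : Type*} [Group G] [TopologicalSpace G]
    [Group H] [TopologicalSpace H] (hG : IsCompactlyGeneratedGroup G) {f : G →* H}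
    (hf : Continuous f) (hsurj : Function.Surjective f) : IsCompactlyGeneratedGroup H := by
  obtain ⟨K, hKc, hK⟩ := hG
  refine ⟨f '' K, hKc.image hf, ?_⟩
  rw [← MonoidHom.map_closure, hK, Subgroup.map_top_of_surjective f hsurj]

theorem IsCompactlyGeneratedGroup.fg {G : Type*} [Group G] [TopologicalSpace G]
    [DiscreteTopology G] (hG : IsCompactlyGeneratedGroup G) : Group.FG G := by
  obtain ⟨K, hKc, hK⟩ := hG
  exact Group.fg_iff.mpr ⟨K, hK, hKc.finite_of_discrete⟩

theorem AddCommGroup.exists_surjective_pi_int_finite_ker (M : Type*) [AddCommGroup M]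
    [AddGroup.FG M] :
    ∃ (d : ℕ) (ψ : M →+ (Fin d → ℤ)), Function.Surjective ψ ∧ (ψ.ker : Set M).Finite := by
  have : Module.Finite ℤ M := Module.Finite.iff_addGroup_fg.mpr ‹_›
  let T := Submodule.torsion ℤ M
  have : Finite T := Module.finite_of_fg_torsion T (Submodule.torsion_isTorsion)
  let b := Module.finBasis ℤ (M ⧸ T)
  let ψ := b.equivFun.toLinearMap ∘ₗ T.mkQ
  have hker : (ψ.toAddMonoidHom.ker : Set M) = T := by
    ext m
    simp [ψ]
  exact ⟨_, ψ.toAddMonoidHom, b.equivFun.surjective.comp T.mkQ_surjective,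
    hker ▸ (T : Set M).toFinite⟩

theorem MonoidHom.exists_rightInverse_of_surjective {P : Type*} [CommGroup P] {d : ℕ}
    (ψ : P →* Multiplicative (Fin d → ℤ)) (hψ : Function.Surjective ψ) :
    ∃ g : Multiplicative (Fin d → ℤ) →* P, Function.RightInverse g ψ := by
  obtain ⟨h, hh⟩ := Module.projective_lifting_property
    (MonoidHom.toAdditiveLeft ψ).toIntLinearMap LinearMap.id hψ
  exact ⟨AddMonoidHom.toMultiplicativeLeft h.toAddMonoidHom,
    fun v => congrArg Multiplicative.ofAdd (LinearMap.congr_fun hh v.toAdd)⟩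

namespace QuotientGroup

theorem isCompact_preimage_mk {Q : Type*} [Group Q] [TopologicalSpace Q]
    [IsTopologicalGroup Q] {V : Subgroup Q} (hV : IsCompact (V : Set Q)) {S : Set (Q ⧸ V)}
    (hS : S.Finite) : IsCompact ((↑) ⁻¹' S : Set Q) := by
  have hS' : ((↑) '' (Quotient.out '' S) : Set (Q ⧸ V)) = S := by
    rw [Set.image_image]
    simp
  rw [← hS', preimage_image_mk_eq_mul]
  exact (hS.image _).isCompact.mul hV

theorem exists_continuous_mulEquiv_of_surjective {H D : Type*} [Group H]
    [TopologicalSpace H] [Group D] [TopologicalSpace D] [DiscreteTopology D] {M : Subgroup H}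
    [M.Normal] (f : H →* D) (hf : Continuous f) (hsurj : Function.Surjective f)
    (hker : f.ker = M) : ∃ e : H ⧸ M ≃* D, Continuous e ∧ Continuous e.symm :=
  ⟨(quotientMulEquivOfEq hker.symm).trans (quotientKerEquivOfSurjective f hsurj),
    (isQuotientMap_mk M).continuous_iff.mpr hf, continuous_of_discreteTopology⟩

end QuotientGroup

theorem CommGroup.exists_continuous_surjective_isCompact_ker {Q : Type*} [CommGroup Q]
    [TopologicalSpace Q] [IsTopologicalGroup Q] (hQ : IsCompactlyGeneratedGroup Q)
    {V : Subgroup Q} (hVo : IsOpen (V : Set Q)) (hVc : IsCompact (V : Set Q)) :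
    ∃ (d : ℕ) (χ : Q →* Multiplicative (Fin d → ℤ)), Continuous χ ∧ Function.Surjective χ ∧
      IsCompact (χ.ker : Set Q) := by
  have : DiscreteTopology (Q ⧸ V) := QuotientGroup.discreteTopology hVo
  have : Group.FG (Q ⧸ V) :=
    (hQ.of_surjective QuotientGroup.continuous_mk (QuotientGroup.mk'_surjective V)).fg
  obtain ⟨d, ψ, hψs, hψk⟩ := AddCommGroup.exists_surjective_pi_int_finite_ker (Additive (Q ⧸ V))
  let χ := (AddMonoidHom.toMultiplicativeRight ψ).comp (QuotientGroup.mk' V)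
  refine ⟨d, χ, (continuous_of_discreteTopology (f := AddMonoidHom.toMultiplicativeRight ψ)).comp
    QuotientGroup.continuous_mk, hψs.comp (QuotientGroup.mk'_surjective V), ?_⟩
  convert QuotientGroup.isCompact_preimage_mk hVc (hψk.image Additive.toMul) using 1
  ext q
  simp [χ]

namespace QuotientGroup

variable {G : Type*} [Group G] [TopologicalSpace G] {C : Subgroup G} [C.Normal]
  {D : Type*} [Group D] {χ : G ⧸ C →* D} {g : D →* G ⧸ C}

theorem isClosed_comap_range [IsTopologicalGroup G] [IsClosed (C : Set G)] [TopologicalSpace D]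
    [DiscreteTopology D] (hg : Function.RightInverse g χ) (hχ : Continuous χ) :
    IsClosed (g.range.comap (mk' C) : Set G) := by
  rw [Subgroup.coe_comap, MonoidHom.coe_range]
  exact (hg.isClosed_range hχ continuous_of_discreteTopology).preimage continuous_mk

theorem compactSpace_quotient_comap_range (hg : Function.RightInverse g χ)
    (hχ : IsCompact (χ.ker : Set (G ⧸ C))) : CompactSpace (G ⧸ g.range.comap (mk' C)) := by
  set N := g.range.comap (mk' C)
  let φ : G ⧸ C → G ⧸ N := Quotient.map' id fun a b hab => by
    rw [leftRel_apply] at hab ⊢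
    exact le_comap_mk' C _ hab
  have hφ : Continuous φ := (isQuotientMap_mk C).continuous_iff.mpr continuous_mk
  refine ⟨?_⟩
  convert hχ.image hφ
  refine (Set.eq_univ_of_forall fun y => ?_).symm
  obtain ⟨x, rfl⟩ := mk_surjective y
  obtain ⟨n, hn⟩ := mk_surjective (g (χ x))
  have hnN : n ∈ N := ⟨χ x, hn.symm⟩
  refine ⟨(x * n⁻¹ : G), ?_, mk_mul_of_mem x (N.inv_mem hnN)⟩
  simp [hn, hg (χ x)]

theorem exists_continuous_mulEquiv_quotient_comap_range [TopologicalSpace D]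
    [DiscreteTopology D] (hg : Function.RightInverse g χ) (hχ : Continuous χ) :
    ∃ e : g.range.comap (mk' C) ⧸ C.subgroupOf (g.range.comap (mk' C)) ≃* D,
      Continuous e ∧ Continuous e.symm := by
  set N := g.range.comap (mk' C)
  let f : N →* D := χ.comp ((mk' C).comp N.subtype)
  have hf (x : G) (v : D) (hv : g v = x) (hx : x ∈ N) : f ⟨x, hx⟩ = v := by
    show χ x = v
    rw [← hv, hg v]
  refine exists_continuous_mulEquiv_of_surjective f
    (hχ.comp (continuous_mk.comp continuous_subtype_val)) (fun v => ?_) ?_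
  · obtain ⟨x, hx⟩ := mk_surjective (g v)
    exact ⟨⟨x, v, hx.symm⟩, hf x v hx.symm _⟩
  · ext ⟨x, hx⟩
    obtain ⟨v, hv⟩ := id hx
    rw [MonoidHom.mem_ker, hf x v hv, Subgroup.mem_subgroupOf, ← eq_one_iff]
    exact (map_eq_one_iff g hg.injective).symm.trans (hv ▸ Iff.rfl)

end QuotientGroup

theorem lemma_2_14_general {G : Type*} [Group G] [TopologicalSpace G] [IsTopologicalGroup G]
    [TotallyDisconnectedSpace G] [LocallyCompactSpace G]
    (hcg : IsCompactlyGeneratedGroup G) :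
    ∃ N : Subgroup G, N.Normal ∧ IsClosed (N : Set G) ∧ CompactSpace (G ⧸ N) ∧
      (commutator G).topologicalClosure ≤ N ∧
      ∃ (d : ℕ)
        (e : (↥N ⧸ ((commutator G).topologicalClosure.subgroupOf N)) ≃*
          Multiplicative (Fin d → ℤ)),
        Continuous ⇑e ∧ Continuous ⇑e.symm := by
  set C := (commutator G).topologicalClosure
  have hC : commutator G ≤ C := (commutator G).le_topologicalClosure
  have : IsClosed (C : Set G) := (commutator G).isClosed_topologicalClosure
  have : IsMulCommutative (G ⧸ C) := Subgroup.Normal.quotient_commutative_iff_commutator_le.mpr hC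
  let : CommGroup (G ⧸ C) := { mul_comm := mul_comm' }
  obtain ⟨U, hUo, hUc⟩ := exists_isOpen_isCompact_subgroup (G := G)
  obtain ⟨d, χ, hχc, hχs, hχk⟩ := CommGroup.exists_continuous_surjective_isCompact_ker
    (hcg.of_surjective QuotientGroup.continuous_mk (QuotientGroup.mk'_surjective C))
    (V := U.map (QuotientGroup.mk' C)) (QuotientGroup.isOpenMap_coe _ hUo)
    (hUc.image QuotientGroup.continuous_mk)
  obtain ⟨g, hg⟩ := χ.exists_rightInverse_of_surjective hχs
  have hCN := QuotientGroup.le_comap_mk' C g.range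
  exact ⟨_, .of_commutator_le _ (hC.trans hCN), QuotientGroup.isClosed_comap_range hg hχc,
    QuotientGroup.compactSpace_quotient_comap_range hg hχk, hCN, d,
    QuotientGroup.exists_continuous_mulEquiv_quotient_comap_range hg hχc⟩

/-- **Lemma 2.14.** Let `G` be a locally compact compactly generated totally disconnected
solvable group. Then there exists a closed normal cocompact subgroup `N` containing the closure
of the commutator subgroup, such that `N / cl([G,G])` is topologically isomorphic to `ℤ^d`
(with the discrete topology) for some `d ≥ 0`. -/
theorem lemma_2_14 {G : Type*} [Group G] [TopologicalSpace G] [IsTopologicalGroup G]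
    [TotallyDisconnectedSpace G] [LocallyCompactSpace G]
    (hcg : IsCompactlyGeneratedGroup G) (hsolv : IsSolvable G) :
    ∃ N : Subgroup G, N.Normal ∧ IsClosed (N : Set G) ∧ CompactSpace (G ⧸ N) ∧
      (commutator G).topologicalClosure ≤ N ∧
      ∃ (d : ℕ)
        (e : (↥N ⧸ ((commutator G).topologicalClosure.subgroupOf N)) ≃*
          Multiplicative (Fin d → ℤ)),
        Continuous ⇑e ∧ Continuous ⇑e.symm :=
  lemma_2_14_general hcg
end

section
/- Let G be a locally compact group, μ a regular Borel probability measure on G, and N a closed normal subgroup of G. If μ is a Choquet-Deny measure on G, then the projection of μ onto G/N (the pushforward of μ under the canonical homomorphism G → G/N) is a Choquet-Deny measure on G/N. -/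
open Filter Topology MeasureTheory Pointwise

section MeasDefs
variable {G : Type*} [Group G] [TopologicalSpace G] [MeasurableSpace G]

/-- The support of a measure: the set of points all of whose neighbourhoods
have positive measure. -/
def measSupport (μ : Measure G) : Set G := {x : G | ∀ U ∈ nhds x, 0 < μ U}

/-- `G_μ`: the smallest closed subgroup of `G` containing the support of `μ`. -/
def adaptedSubgroup [IsTopologicalGroup G] (μ : Measure G) : Subgroup G :=
  (Subgroup.closure (measSupport μ)).topologicalClosure

/-- `μ` is a Choquet–Deny measure: every bounded continuous `μ`-harmonic function
`h` (i.e. `h(g) = ∫ h(g g') μ(dg')` for all `g`) is constant on the left cosets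
of `G_μ`. -/
def IsChoquetDenyMeasure [IsTopologicalGroup G] (μ : Measure G) : Prop :=
  ∀ h : G → ℂ, Continuous h → (∃ C : ℝ, ∀ g : G, ‖h g‖ ≤ C) →
    (∀ g : G, h g = ∫ x, h (g * x) ∂μ) →
    ∀ g : G, ∀ y ∈ adaptedSubgroup μ, h (g * y) = h g

/-- Weak convergence of a net of measures along a filter, in the
`σ(M₁(G), C_b(G))`-topology: integrals of bounded continuous functions converge. -/
def WeaklyTendsto {ι : Type*} (l : Filter ι) (μs : ι → Measure G) (ν : Measure G) : Prop :=
  ∀ f : BoundedContinuousFunction G ℝ,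
    Tendsto (fun a => ∫ x, f x ∂(μs a)) l (nhds (∫ x, f x ∂ν))

end MeasDefs

/-!
Pulling a bounded continuous harmonic function `h` on `H` back along a continuous surjective
homomorphism `φ : G → H` gives a harmonic function for `μ`, so `h` is invariant under right
translation by `φ (supp μ)`. The right periods of `h` form a closed subgroup of `H`, and the
support of `φ₊μ` lies in the closure of `φ (supp μ)` because the support of a regular measure
is conull. Hence all of `H_{φ₊μ}` consists of periods of `h`.
-/

lemma measSupport_eq_support {X : Type*} [TopologicalSpace X] [MeasurableSpace X]
    (μ : Measure X) : measSupport μ = μ.support := by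
  ext x
  exact (Measure.mem_support_iff_forall x).symm

lemma MeasureTheory.Measure.support_map_subset_closure_image {X Y : Type*}
    [TopologicalSpace X] [MeasurableSpace X] [OpensMeasurableSpace X]
    [TopologicalSpace Y] [MeasurableSpace Y] [BorelSpace Y]
    (μ : Measure X) [μ.Regular] {f : X → Y} (hf : Continuous f) :
    (μ.map f).support ⊆ closure (f '' μ.support) := by
  refine Measure.support_subset_of_isClosed isClosed_closure ?_
  rw [mem_ae_map_iff hf.measurable.aemeasurable isClosed_closure.measurableSet]
  exact mem_of_superset Measure.support_mem_ae_of_regular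
    fun x hx => subset_closure (Set.mem_image_of_mem f hx)

section AdaptedSubgroup

variable {G : Type*} [Group G] [TopologicalSpace G] [IsTopologicalGroup G] [MeasurableSpace G]

lemma measSupport_subset_adaptedSubgroup (μ : Measure G) :
    measSupport μ ⊆ adaptedSubgroup μ :=
  fun _ hx => Subgroup.le_topologicalClosure _ (Subgroup.subset_closure hx)

lemma adaptedSubgroup_le_of_measSupport_subset {μ : Measure G} {K : Subgroup G}
    (hK : IsClosed (K : Set G)) (hμK : measSupport μ ⊆ K) : adaptedSubgroup μ ≤ K :=
  Subgroup.topologicalClosure_minimal _ (Subgroup.closure_le K |>.mpr hμK) hK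

end AdaptedSubgroup

def rightPeriods {G α : Type*} [Group G] (h : G → α) : Subgroup G where
  carrier := {y | ∀ g, h (g * y) = h g}
  mul_mem' {a b} ha hb g := by rw [← mul_assoc, hb, ha]
  one_mem' g := by rw [mul_one]
  inv_mem' {a} ha g := by rw [← ha (g * a⁻¹), inv_mul_cancel_right]

lemma isClosed_rightPeriods {G α : Type*} [Group G] [TopologicalSpace G] [ContinuousMul G]
    [TopologicalSpace α] [T2Space α] {h : G → α} (hc : Continuous h) :
    IsClosed (rightPeriods h : Set G) := by
  have : (rightPeriods h : Set G) = ⋂ g, {y | h (g * y) = h g} := by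
    ext y
    simp [rightPeriods]
  rw [this]
  exact isClosed_iInter fun g => isClosed_eq (hc.comp (continuous_const_mul g)) continuous_const

lemma harmonic_comp_of_harmonic_map {G H : Type*} [Group G] [TopologicalSpace G]
    [MeasurableSpace G] [OpensMeasurableSpace G] [Group H] [TopologicalSpace H] [ContinuousMul H]
    [MeasurableSpace H] [BorelSpace H] {μ : Measure G} {φ : G →* H} (hφ : Continuous φ)
    {h : H → ℂ} (hc : Continuous h) (hharm : ∀ g : H, h g = ∫ x, h (g * x) ∂(μ.map φ))
    (g : G) : h (φ g) = ∫ x, h (φ (g * x)) ∂μ := by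
  rw [hharm, integral_map (f := fun x => h (φ g * x)) hφ.measurable.aemeasurable
    (hc.comp (continuous_const_mul (φ g))).aestronglyMeasurable]
  simp only [map_mul]

section Map

variable {G H : Type*} [Group G] [TopologicalSpace G] [IsTopologicalGroup G]
  [MeasurableSpace G] [OpensMeasurableSpace G]
  [Group H] [TopologicalSpace H] [IsTopologicalGroup H] [MeasurableSpace H] [BorelSpace H]

theorem IsChoquetDenyMeasure.map {μ : Measure G} [μ.Regular] (hCD : IsChoquetDenyMeasure μ)
    (φ : G →* H) (hφ : Continuous φ) (hφs : Function.Surjective φ) :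
    IsChoquetDenyMeasure (μ.map φ) := by
  intro h hc ⟨C, hC⟩ hharm
  have hperiod : ∀ y ∈ measSupport μ, φ y ∈ rightPeriods h := by
    intro y hy g
    obtain ⟨g, rfl⟩ := hφs g
    have := hCD (h ∘ φ) (hc.comp hφ) ⟨C, fun g => hC (φ g)⟩
      (harmonic_comp_of_harmonic_map hφ hc hharm) g y (measSupport_subset_adaptedSubgroup μ hy)
    simpa only [Function.comp, map_mul] using this
  have hsupp : measSupport (μ.map φ) ⊆ rightPeriods h := by
    rw [measSupport_eq_support, ← (isClosed_rightPeriods hc).closure_eq]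
    refine (μ.support_map_subset_closure_image hφ).trans (closure_mono ?_)
    rw [← measSupport_eq_support]
    exact Set.image_subset_iff.mpr hperiod
  exact fun g y hy => adaptedSubgroup_le_of_measSupport_subset (isClosed_rightPeriods hc) hsupp hy g

end Map

theorem lemma_3_1_a_general {G : Type*} [Group G] [TopologicalSpace G] [IsTopologicalGroup G]
    [MeasurableSpace G] [BorelSpace G]
    (μ : Measure G) [μ.Regular]
    (N : Subgroup G) [N.Normal]
    [MeasurableSpace (G ⧸ N)] [BorelSpace (G ⧸ N)]
    (hCD : IsChoquetDenyMeasure μ) :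
    IsChoquetDenyMeasure (Measure.map (QuotientGroup.mk : G → G ⧸ N) μ) :=
  hCD.map (QuotientGroup.mk' N) continuous_quotient_mk' QuotientGroup.mk_surjective

/-- **Lemma 3.1(a).** If `μ` is a Choquet–Deny (regular Borel probability) measure on a locally
compact group `G` and `N ⊆ G` is a closed normal subgroup, then the projection of `μ` onto
`G/N` is a Choquet–Deny measure on `G/N`. -/
theorem lemma_3_1_a {G : Type*} [Group G] [TopologicalSpace G] [IsTopologicalGroup G]
    [LocallyCompactSpace G] [MeasurableSpace G] [BorelSpace G]
    (μ : Measure G) [IsProbabilityMeasure μ] [μ.Regular]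
    (N : Subgroup G) [N.Normal] (hNclosed : IsClosed (N : Set G))
    [MeasurableSpace (G ⧸ N)] [BorelSpace (G ⧸ N)]
    (hCD : IsChoquetDenyMeasure μ) :
    IsChoquetDenyMeasure (Measure.map (QuotientGroup.mk : G → G ⧸ N) μ) :=
  lemma_3_1_a_general μ N hCD
end

section
/- Let G be a locally compact group and μ a regular Borel probability measure on G. If every neighbourhood of the identity in G contains a compact normal subgroup N such that the projection of μ onto G/N is a Choquet-Deny measure, then μ is a Choquet-Deny measure on G. -/
open Filter Topology MeasureTheory Pointwise

/-!
Average a bounded continuous `μ`-harmonic function `h` over a compact normal subgroup `N` with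
respect to its normalised Haar measure `ρ`: `φ a = ∫ n, h (a * n) ∂ρ`. Haar measure on `N` is
invariant under conjugation by elements of `G`, so `φ` is again `μ`-harmonic; it is also
right `N`-invariant, hence descends to a bounded continuous harmonic function for the projection
of `μ` to `G ⧸ N`, and the Choquet–Deny property there makes `φ` constant on the left cosets
of `G_μ`. If `N` lies in a neighbourhood of `1` on which `h (g * ·)` and `h (g * y * ·)` vary
by at most `ε / 2`, then `φ` is `ε / 2`-close to `h` at `g` and at `g * y`, so
`dist (h (g * y)) (h g) ≤ ε` for every `ε > 0`.
-/

open scoped ENNReal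

theorem Continuous.aestronglyMeasurable_of_innerRegularCompactLTTop {X E : Type*}
    [TopologicalSpace X] [R1Space X] [MeasurableSpace X] [BorelSpace X]
    [TopologicalSpace E] [TopologicalSpace.PseudoMetrizableSpace E] {μ : Measure X}
    [IsFiniteMeasure μ] [μ.InnerRegularCompactLTTop] {f : X → E} (hf : Continuous f) :
    AEStronglyMeasurable f μ := by
  have hK (n : ℕ) : ∃ K, IsCompact K ∧ IsClosed K ∧ μ Kᶜ < (n : ℝ≥0∞)⁻¹ := by
    obtain ⟨K, -, hKc, hKcl, hK⟩ := MeasurableSet.univ.exists_isCompact_isClosed_sdiff_lt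
      (measure_ne_top μ _) (ENNReal.inv_ne_zero.2 (ENNReal.natCast_ne_top n))
    exact ⟨K, hKc, hKcl, by simpa [Set.compl_eq_univ_sdiff] using hK⟩
  choose K hKc hKcl hKμ using hK
  have hnull : μ (⋃ n, K n)ᶜ = 0 :=
    le_antisymm (ge_of_tendsto' ENNReal.tendsto_inv_nat_nhds_zero fun n =>
      (measure_mono (Set.compl_subset_compl.2 (Set.subset_iUnion K n))).trans (hKμ n).le)
      bot_le
  rw [← Measure.restrict_eq_self_of_ae_mem (s := ⋃ n, K n)
    ((measure_eq_zero_iff_ae_notMem.1 hnull).mono fun _ => Set.notMem_compl_iff.1)]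
  exact aestronglyMeasurable_iUnion_iff.2 fun n =>
    hf.continuousOn.aestronglyMeasurable_of_isCompact (hKc n) (hKcl n).measurableSet

namespace ContinuousMap

variable {X E : Type*} [TopologicalSpace X] [CompactSpace X] [MeasurableSpace X]
  [OpensMeasurableSpace X] [NormedAddCommGroup E]

theorem integrable (ρ : Measure X) [IsFiniteMeasure ρ] (f : C(X, E)) : Integrable f ρ :=
  .of_bound f.continuous.aestronglyMeasurable_of_compactSpace ‖f‖
    (ae_of_all _ f.norm_coe_le_norm)

variable [NormedSpace ℝ E]

noncomputable def integralCLM (ρ : Measure X) [IsFiniteMeasure ρ] : C(X, E) →L[ℝ] E :=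
  LinearMap.mkContinuous
    { toFun f := ∫ x, f x ∂ρ
      map_add' f g := integral_add (f.integrable ρ) (g.integrable ρ)
      map_smul' c f := integral_smul c f }
    (ρ.real Set.univ) fun f => by
      rw [mul_comm]
      exact norm_integral_le_of_norm_le_const (ae_of_all _ f.norm_coe_le_norm)

theorem integralCLM_apply (ρ : Measure X) [IsFiniteMeasure ρ] (f : C(X, E)) :
    integralCLM ρ f = ∫ x, f x ∂ρ :=
  rfl

end ContinuousMap

theorem MeasureTheory.Measure.map_continuousMulEquiv_eq_self {K : Type*} [Group K]
    [TopologicalSpace K] [IsTopologicalGroup K] [CompactSpace K] [MeasurableSpace K]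
    [BorelSpace K] (ρ : Measure K) [IsProbabilityMeasure ρ] [ρ.IsHaarMeasure] (e : K ≃ₜ* K) :
    ρ.map e = ρ := by
  have : LocallyCompactSpace K :=
    isCompact_univ.locallyCompactSpace_of_mem_nhds_of_group (x := 1) Filter.univ_mem
  have : IsProbabilityMeasure (ρ.map e) := isProbabilityMeasure_map e.continuous.aemeasurable
  exact isHaarMeasure_eq_of_isProbabilityMeasure _ _

namespace Subgroup

variable {G : Type*} [Group G] [TopologicalSpace G] [IsTopologicalGroup G] (N : Subgroup G)
  [N.Normal]

def continuousConjNormal (x : G) : N ≃ₜ* N where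
  toMulEquiv := MulAut.conjNormal x
  continuous_toFun := by
    refine continuous_induced_rng.2 ?_
    simp only [Function.comp_def, MulEquiv.toEquiv_eq_coe, Equiv.toFun_as_coe,
      MulEquiv.coe_toEquiv, MulAut.conjNormal_apply]
    fun_prop
  continuous_invFun := by
    refine continuous_induced_rng.2 ?_
    simp only [Function.comp_def, MulEquiv.toEquiv_eq_coe, Equiv.invFun_as_coe,
      MulEquiv.coe_toEquiv_symm, MulAut.conjNormal_symm_apply]
    fun_prop

theorem integral_conj_eq [MeasurableSpace G] [BorelSpace G] [CompactSpace N]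
    {E : Type*} [NormedAddCommGroup E] [NormedSpace ℝ E]
    (ρ : Measure N) [IsProbabilityMeasure ρ] [ρ.IsHaarMeasure] (x : G) (f : N → E) :
    ∫ n, f (MulAut.conjNormal x n) ∂ρ = ∫ n, f n ∂ρ := by
  have : BorelSpace N := Subtype.borelSpace _
  let e := N.continuousConjNormal x
  calc ∫ n, f (MulAut.conjNormal x n) ∂ρ = ∫ n, f (e n) ∂ρ := rfl
    _ = ∫ n, f n ∂(ρ.map e) := (e.toHomeomorph.measurableEmbedding.integral_map f).symm
    _ = ∫ n, f n ∂ρ := by rw [ρ.map_continuousMulEquiv_eq_self e]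

end Subgroup

section RightAverage

variable {G E : Type*} [Group G] [MeasurableSpace G] [NormedAddCommGroup E] [NormedSpace ℝ E]
  {N : Subgroup G}

noncomputable def rightAverage (ρ : Measure N) (h : G → E) (a : G) : E :=
  ∫ n, h (a * n) ∂ρ

variable (ρ : Measure N) {h : G → E}

theorem norm_rightAverage_le [IsProbabilityMeasure ρ] {C : ℝ} (hC : ∀ g, ‖h g‖ ≤ C) (a : G) :
    ‖rightAverage ρ h a‖ ≤ C := by
  simpa [rightAverage] using
    norm_integral_le_of_norm_le_const (μ := ρ) (ae_of_all _ fun n => hC (a * n))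

variable [TopologicalSpace G] [IsTopologicalGroup G] [BorelSpace G]

theorem continuous_rightAverage [CompactSpace N] [IsFiniteMeasure ρ] (hh : Continuous h) :
    Continuous (rightAverage ρ h) :=
  (ContinuousMap.integralCLM ρ).continuous.comp
    (ContinuousMap.curry ⟨fun p : G × N => h (p.1 * p.2), by fun_prop⟩).continuous

theorem rightAverage_mul_of_mem [ρ.IsMulLeftInvariant] (a : G) (n : N) :
    rightAverage ρ h (a * n) = rightAverage ρ h a := by
  simp only [rightAverage, mul_assoc, ← Subgroup.coe_mul]
  exact integral_mul_left_eq_self (fun m : N => h (a * m)) n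

theorem dist_rightAverage_le [CompactSpace N] [CompleteSpace E] [IsProbabilityMeasure ρ]
    (hh : Continuous h) {a : G} {ε : ℝ} (hε : ∀ n ∈ N, dist (h (a * n)) (h a) ≤ ε) :
    dist (rightAverage ρ h a) (h a) ≤ ε := by
  have hint : Integrable (fun n : N => h (a * n)) ρ :=
    ContinuousMap.integrable ρ ⟨fun n : N => h (a * n), by fun_prop⟩
  calc dist (rightAverage ρ h a) (h a) = ‖∫ n, (h (a * n) - h a) ∂ρ‖ := by
        rw [integral_sub hint (integrable_const _), integral_const, probReal_univ, one_smul,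
          dist_eq_norm, rightAverage]
    _ ≤ ε := by
        simpa using norm_integral_le_of_norm_le_const (μ := ρ)
          (ae_of_all _ fun n => (dist_eq_norm _ _).symm.trans_le (hε n n.2))

theorem rightAverage_harmonic [N.Normal] [CompactSpace N] [CompleteSpace E] {μ : Measure G}
    [IsFiniteMeasure μ] [μ.InnerRegularCompactLTTop] [IsProbabilityMeasure ρ] [ρ.IsHaarMeasure]
    (hh : Continuous h) {C : ℝ} (hC : ∀ g, ‖h g‖ ≤ C) (hharm : ∀ g, h g = ∫ x, h (g * x) ∂μ)
    (a : G) : rightAverage ρ h a = ∫ x, rightAverage ρ h (a * x) ∂μ := by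
  -- Fubini for `ρ.prod μ` is unavailable (a continuous function on `N × G` need not be
  -- measurable for the product σ-algebra); instead `integralCLM ρ` is commuted with the
  -- integral of the `C(N, E)`-valued function `x ↦ (n ↦ h (a * n * x))`.
  let F : G → C(N, E) := ContinuousMap.curry ⟨fun p : G × N => h (a * p.2 * p.1), by fun_prop⟩
  have hF : Integrable F μ :=
    .of_bound (map_continuous _).aestronglyMeasurable_of_innerRegularCompactLTTop C
      (ae_of_all _ fun x => (ContinuousMap.norm_le _ ((norm_nonneg _).trans (hC 1))).2
        fun n => hC _)
  have hmean : ∫ x, F x ∂μ = ⟨fun n : N => h (a * n), by fun_prop⟩ := by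
    ext n
    rw [ContinuousMap.integral_apply hF]
    exact (hharm (a * n)).symm
  calc rightAverage ρ h a = ContinuousMap.integralCLM ρ (∫ x, F x ∂μ) := by
        rw [hmean, ContinuousMap.integralCLM_apply]
        rfl
    _ = ∫ x, ContinuousMap.integralCLM ρ (F x) ∂μ :=
        (ContinuousLinearMap.integral_comp_comm _ hF).symm
    _ = ∫ x, rightAverage ρ h (a * x) ∂μ := by
        refine integral_congr_ae (ae_of_all _ fun x => ?_)
        refine (integral_congr_ae (ae_of_all _ fun n => ?_)).trans
          (N.integral_conj_eq ρ x⁻¹ fun n => h (a * x * n))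
        simp [F, mul_assoc]

end RightAverage

section Pushforward

variable {G H : Type*} [TopologicalSpace G] [MeasurableSpace G] [OpensMeasurableSpace G]
  [TopologicalSpace H] [MeasurableSpace H] [BorelSpace H] {μ : Measure G}

theorem image_measSupport_subset {f : G → H} (hf : Continuous f) :
    f '' measSupport μ ⊆ measSupport (μ.map f) := by
  rintro _ ⟨x, hx, rfl⟩ U hU
  exact (hx _ (hf.continuousAt.preimage_mem_nhds hU)).trans_le
    (Measure.le_map_apply hf.aemeasurable U)

theorem map_mem_adaptedSubgroup [Group G] [IsTopologicalGroup G] [Group H]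
    [IsTopologicalGroup H] (f : G →* H) (hf : Continuous f) {y : G} (hy : y ∈ adaptedSubgroup μ) :
    f y ∈ adaptedSubgroup (μ.map f) := by
  have hle :
      (Subgroup.closure (measSupport μ)).map f ≤ Subgroup.closure (measSupport (μ.map f)) := by
    rw [MonoidHom.map_closure]
    exact Subgroup.closure_mono (image_measSupport_subset hf)
  exact map_mem_closure hf hy fun z hz => hle ⟨z, hz, rfl⟩

end Pushforward

theorem IsChoquetDenyMeasure.apply_mul_eq_of_map_mk {G : Type*} [Group G] [TopologicalSpace G]
    [IsTopologicalGroup G] [MeasurableSpace G] [BorelSpace G] {N : Subgroup G} [N.Normal]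
    [MeasurableSpace (G ⧸ N)] [BorelSpace (G ⧸ N)] {μ : Measure G}
    (hCD : IsChoquetDenyMeasure (μ.map (QuotientGroup.mk : G → G ⧸ N))) {φ : G → ℂ}
    (hφ : Continuous φ) (hbdd : ∃ C : ℝ, ∀ g, ‖φ g‖ ≤ C)
    (hharm : ∀ g, φ g = ∫ x, φ (g * x) ∂μ) (hinv : ∀ a, ∀ n ∈ N, φ (a * n) = φ a)
    (g : G) {y : G} (hy : y ∈ adaptedSubgroup μ) : φ (g * y) = φ g := by
  let Φ : G ⧸ N → ℂ := fun q => q.liftOn' φ fun a b hab => by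
    rw [← hinv a _ (QuotientGroup.leftRel_apply.1 hab), mul_inv_cancel_left]
  have hΦ : Continuous Φ := (QuotientGroup.isQuotientMap_mk N).continuous_iff.2 hφ
  obtain ⟨C, hC⟩ := hbdd
  refine hCD Φ hΦ ⟨C, QuotientGroup.mk_surjective.forall.2 hC⟩
    (QuotientGroup.mk_surjective.forall.2 fun a => ?_) g y
    (map_mem_adaptedSubgroup (QuotientGroup.mk' N) QuotientGroup.continuous_mk hy)
  exact (hharm a).trans (integral_map (f := fun z : G ⧸ N => Φ (a * z))
    QuotientGroup.continuous_mk.aemeasurable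
    (hΦ.comp (continuous_const_mul _)).aestronglyMeasurable).symm

theorem lemma_3_1_b_general {G : Type*} [Group G] [TopologicalSpace G] [IsTopologicalGroup G]
    [MeasurableSpace G] [BorelSpace G]
    (μ : Measure G) [IsProbabilityMeasure μ] [μ.Regular]
    (hyp : ∀ U ∈ nhds (1 : G), ∃ N : Subgroup G, (N : Set G) ⊆ U ∧ IsCompact (N : Set G) ∧
      ∃ hN : N.Normal,
        letI := hN
        letI : MeasurableSpace (G ⧸ N) := borel (G ⧸ N)
        haveI : BorelSpace (G ⧸ N) := ⟨rfl⟩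
        IsChoquetDenyMeasure (Measure.map (QuotientGroup.mk : G → G ⧸ N) μ)) :
    IsChoquetDenyMeasure μ := by
  intro h hh ⟨C, hC⟩ hharm g y hy
  refine eq_of_forall_dist_le fun ε hε => ?_
  have hnear (a : G) : ∀ᶠ u in 𝓝 (1 : G), dist (h (a * u)) (h a) ≤ ε / 2 := by
    simpa using ((hh.comp (continuous_const_mul a)).tendsto 1).eventually
      (Metric.closedBall_mem_nhds _ (half_pos hε))
  obtain ⟨N, hNU, hNc, hN, hCD⟩ := hyp _ ((hnear g).and (hnear (g * y)))
  let : MeasurableSpace (G ⧸ N) := borel (G ⧸ N)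
  have : BorelSpace (G ⧸ N) := ⟨rfl⟩
  have : CompactSpace N := isCompact_iff_compactSpace.1 hNc
  let ρ : Measure N := Measure.haarMeasure ⊤
  have : IsProbabilityMeasure ρ := ⟨Measure.haarMeasure_self⟩
  have hρ : rightAverage ρ h (g * y) = rightAverage ρ h g :=
    hCD.apply_mul_eq_of_map_mk (continuous_rightAverage ρ hh) ⟨C, norm_rightAverage_le ρ hC⟩
      (rightAverage_harmonic ρ hh hC hharm) (fun a n hn => rightAverage_mul_of_mem ρ a ⟨n, hn⟩)
      g hy
  calc dist (h (g * y)) (h g)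
      ≤ dist (rightAverage ρ h (g * y)) (h (g * y)) + dist (rightAverage ρ h g) (h g) := by
        rw [← hρ]
        exact dist_triangle_left _ _ _
    _ ≤ ε / 2 + ε / 2 := add_le_add (dist_rightAverage_le ρ hh fun n hn => (hNU hn).2)
        (dist_rightAverage_le ρ hh fun n hn => (hNU hn).1)
    _ = ε := add_halves ε

/-- **Lemma 3.1(b).** If every neighbourhood of the identity of a locally compact group `G`
contains a compact normal subgroup `N` such that the projection of `μ` onto `G/N` is a
Choquet–Deny measure, then `μ` is a Choquet–Deny measure. -/
theorem lemma_3_1_b {G : Type*} [Group G] [TopologicalSpace G] [IsTopologicalGroup G]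
    [LocallyCompactSpace G] [MeasurableSpace G] [BorelSpace G]
    (μ : Measure G) [IsProbabilityMeasure μ] [μ.Regular]
    (hyp : ∀ U ∈ nhds (1 : G), ∃ N : Subgroup G, (N : Set G) ⊆ U ∧ IsCompact (N : Set G) ∧
      ∃ hN : N.Normal,
        letI := hN
        letI : MeasurableSpace (G ⧸ N) := borel (G ⧸ N)
        haveI : BorelSpace (G ⧸ N) := ⟨rfl⟩
        IsChoquetDenyMeasure (Measure.map (QuotientGroup.mk : G → G ⧸ N) μ)) :
    IsChoquetDenyMeasure μ :=
  lemma_3_1_b_general μ hyp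
end
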